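/- Let λ be a partition of a positive integer n ≥ 3. Then the number of standard Young tableaux T of shape λ having both i and i+1 as descents is the same for all i with 1 ≤ i ≤ n−2; that is, #{T : i ∈ D(T) and i+1 ∈ D(T)} does not depend on i. -/
import Mathlib


open scoped BigOperators

/-- A standard Young tableau of shape `Y` (a Young diagram with `Y.card = n`):
a bijective filling of the cells of `Y` by the numbers `1, …, n`, strictly increasing
along each row (left to right) and down each column.  Entries outside the
diagram are `0`. -/
structure SYT (Y : YoungDiagram) where
  entry : ℕ → ℕ → ℕ
  bijOn : Set.BijOn (fun c : ℕ × ℕ => entry c.1 c.2) ↑Y.cells (Set.Icc 1 Y.card)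
  row_strict : ∀ ⦃i j1 j2 : ℕ⦄, j1 < j2 → (i, j2) ∈ Y → entry i j1 < entry i j2
  col_strict : ∀ ⦃i1 i2 j : ℕ⦄, i1 < i2 → (i2, j) ∈ Y → entry i1 j < entry i2 j
  zeros : ∀ ⦃i j : ℕ⦄, (i, j) ∉ Y → entry i j = 0

namespace SYT

variable {Y : YoungDiagram}

/-- `i` is a descent of `T` : the entry `i + 1` lies in a strictly lower row
than the entry `i`. -/
def IsDescent (T : SYT Y) (i : ℕ) : Prop :=
  ∃ c ∈ Y.cells, ∃ c' ∈ Y.cells,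
    T.entry c.1 c.2 = i ∧ T.entry c'.1 c'.2 = i + 1 ∧ c.1 < c'.1

open Classical in
/-- The descent set `D(T)` of a standard Young tableau, as a finset.
(Descents necessarily lie in `{1, …, n - 1}` ⊆ `range n`.) -/
noncomputable def descents (T : SYT Y) : Finset ℕ :=
  (Finset.range Y.card).filter fun i => T.IsDescent i

/-- The major index `maj(T) = ∑_{i ∈ D(T)} i`. -/
noncomputable def maj (T : SYT Y) : ℕ :=
  ∑ i ∈ T.descents, i

/-- The descent function `d_f(T) = ∑_{i ∈ D(T)} f(i)`. -/
noncomputable def dfun (f : ℕ → ℝ) (T : SYT Y) : ℝ :=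
  ∑ i ∈ T.descents, f i

end SYT

namespace SYT

variable {Y : YoungDiagram}
theorem ext' : ∀ {T U : SYT Y}, T.entry = U.entry → T = U
  | ⟨_, _, _, _, _⟩, ⟨_, _, _, _, _⟩, rfl => rfl

theorem entry_mem (T : SYT Y) {a b : ℕ} (h : (a, b) ∈ Y) :
    T.entry a b ∈ Set.Icc 1 Y.card :=
  T.bijOn.mapsTo (by simpa using h)

noncomputable def pos (T : SYT Y) (k : ℕ) : ℕ × ℕ :=
  if h : ∃ c, c ∈ Y ∧ T.entry c.1 c.2 = k then h.choose else (0, 0)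

theorem pos_spec (T : SYT Y) {k : ℕ} (hk : k ∈ Set.Icc 1 Y.card) :
    T.pos k ∈ Y ∧ T.entry (T.pos k).1 (T.pos k).2 = k := by
  obtain ⟨c, hc, hck⟩ := T.bijOn.surjOn hk
  have h : ∃ c, c ∈ Y ∧ T.entry c.1 c.2 = k := ⟨c, by simpa using hc, hck⟩
  rw [pos, dif_pos h]
  exact h.choose_spec

theorem pos_mem (T : SYT Y) {k : ℕ} (hk : k ∈ Set.Icc 1 Y.card) : T.pos k ∈ Y :=
  (T.pos_spec hk).1

theorem entry_pos (T : SYT Y) {k : ℕ} (hk : k ∈ Set.Icc 1 Y.card) :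
    T.entry (T.pos k).1 (T.pos k).2 = k :=
  (T.pos_spec hk).2

theorem pos_entry (T : SYT Y) {c : ℕ × ℕ} (hc : c ∈ Y) :
    T.pos (T.entry c.1 c.2) = c := by
  have hk : T.entry c.1 c.2 ∈ Set.Icc 1 Y.card := T.entry_mem hc
  have h1 : T.pos (T.entry c.1 c.2) ∈ ↑Y.cells := by
    simpa using T.pos_mem hk
  have h2 : c ∈ (↑Y.cells : Set (ℕ × ℕ)) := by simpa using hc
  exact T.bijOn.injOn h1 h2 (T.entry_pos hk)

theorem pos_eq_of (T : SYT Y) {c : ℕ × ℕ} {k : ℕ} (hc : c ∈ Y)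
    (h : T.entry c.1 c.2 = k) : T.pos k = c := by
  rw [← h]; exact T.pos_entry hc

theorem pos_ne (T : SYT Y) {k l : ℕ} (hk : k ∈ Set.Icc 1 Y.card)
    (hl : l ∈ Set.Icc 1 Y.card) (h : k ≠ l) : T.pos k ≠ T.pos l := by
  intro he
  apply h
  rw [← T.entry_pos hk, ← T.entry_pos hl, he]

theorem isDescent_iff (T : SYT Y) {k : ℕ} (h1 : 1 ≤ k) (h2 : k + 1 ≤ Y.card) :
    T.IsDescent k ↔ (T.pos k).1 < (T.pos (k + 1)).1 := by
  have hk : k ∈ Set.Icc 1 Y.card := ⟨h1, by omega⟩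
  have hk' : k + 1 ∈ Set.Icc 1 Y.card := ⟨by omega, h2⟩
  constructor
  · rintro ⟨c, hc, c', hc', e1, e2, hlt⟩
    have h1 : T.pos k = c := T.pos_eq_of (by simpa using hc) e1
    have h2 : T.pos (k + 1) = c' := T.pos_eq_of (by simpa using hc') e2
    rw [h1, h2]; exact hlt
  · intro h
    exact ⟨T.pos k, by simpa using T.pos_mem hk, T.pos (k + 1),
      by simpa using T.pos_mem hk', T.entry_pos hk, T.entry_pos hk', h⟩

theorem row_lt_of_col_eq (T : SYT Y) {c d : ℕ × ℕ} (hc : c ∈ Y) (hd : d ∈ Y)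
    (hcol : c.2 = d.2) (h : T.entry c.1 c.2 < T.entry d.1 d.2) : c.1 < d.1 := by
  rcases lt_trichotomy c.1 d.1 with h' | h' | h'
  · exact h'
  · exfalso
    have : c = d := Prod.ext h' hcol
    rw [this] at h; omega
  · exfalso
    have := T.col_strict h' (by rwa [← Prod.mk.eta (p := c), hcol] at hc)
    rw [hcol] at h; omega

theorem col_lt_of_row_eq (T : SYT Y) {c d : ℕ × ℕ} (hc : c ∈ Y) (hd : d ∈ Y)
    (hrow : c.1 = d.1) (h : T.entry c.1 c.2 < T.entry d.1 d.2) : c.2 < d.2 := by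
  rcases lt_trichotomy c.2 d.2 with h' | h' | h'
  · exact h'
  · exfalso
    have : c = d := Prod.ext hrow h'
    rw [this] at h; omega
  · exfalso
    have := T.row_strict h' (by rwa [← Prod.mk.eta (p := c), hrow] at hc)
    rw [hrow] at h; omega

/-- rank of a cell by row within a finset of cells -/
def rnk (E : Finset (ℕ × ℕ)) (c : ℕ × ℕ) : ℕ :=
  (E.filter (fun d => d.1 < c.1)).card

theorem rnk_lt_rnk {E : Finset (ℕ × ℕ)} {c d : ℕ × ℕ} (hc : c ∈ E)
    (h : c.1 < d.1) : rnk E c < rnk E d := by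
  apply Finset.card_lt_card
  constructor
  · intro x hx
    simp only [Finset.mem_filter] at hx ⊢
    exact ⟨hx.1, hx.2.trans h⟩
  · intro hsub
    have : c ∈ E.filter (fun d' => d'.1 < c.1) := hsub (by simp [hc, h])
    simp at this

theorem rnk_le {E : Finset (ℕ × ℕ)} {c : ℕ × ℕ} (hc : c ∈ E) :
    rnk E c ≤ E.card - 1 := by
  have : E.filter (fun d => d.1 < c.1) ⊆ E.erase c := by
    intro x hx
    simp only [Finset.mem_filter] at hx
    exact Finset.mem_erase.2 ⟨by rintro rfl; omega, hx.1⟩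
  calc rnk E c ≤ (E.erase c).card := Finset.card_le_card this
  _ = E.card - 1 := Finset.card_erase_of_mem hc

/-! ### The window of four cells -/

/-- The four cells containing `i, i+1, i+2, i+3`. -/
noncomputable def Sq (T : SYT Y) (i : ℕ) : Finset (ℕ × ℕ) :=
  {T.pos i, T.pos (i + 1), T.pos (i + 2), T.pos (i + 3)}

/-- Context: bounds making the window meaningful. -/
structure Ctx (T : SYT Y) (i : ℕ) : Prop where
  h1 : 1 ≤ i
  h2 : i + 3 ≤ Y.card

namespace Ctx

variable {T : SYT Y} {i : ℕ} (h : Ctx T i)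
include h

theorem memIcc {t : ℕ} (ht : t ≤ 3) : i + t ∈ Set.Icc 1 Y.card :=
  ⟨by have := h.h1; omega, by have := h.h2; omega⟩

theorem posm {t : ℕ} (ht : t ≤ 3) : T.pos (i + t) ∈ Y := T.pos_mem (h.memIcc ht)

theorem entry_posm {t : ℕ} (ht : t ≤ 3) :
    T.entry (T.pos (i + t)).1 (T.pos (i + t)).2 = i + t := T.entry_pos (h.memIcc ht)

theorem pos_ne' {t t' : ℕ} (ht : t ≤ 3) (ht' : t' ≤ 3) (hne : t ≠ t') :
    T.pos (i + t) ≠ T.pos (i + t') :=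
  T.pos_ne (h.memIcc ht) (h.memIcc ht') (by omega)

omit h in
theorem mem_Sq {c : ℕ × ℕ} : c ∈ Sq T i ↔ ∃ t ≤ 3, c = T.pos (i + t) := by
  simp only [Sq, Finset.mem_insert, Finset.mem_singleton]
  constructor
  · rintro (rfl | rfl | rfl | rfl)
    · exact ⟨0, by omega, by simp⟩
    · exact ⟨1, by omega, rfl⟩
    · exact ⟨2, by omega, rfl⟩
    · exact ⟨3, by omega, rfl⟩
  · rintro ⟨t, ht, rfl⟩
    interval_cases t
    · left; simp
    · right; left; rfl
    · right; right; left; rfl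
    · right; right; right; rfl

omit h in
theorem pos_mem_Sq {t : ℕ} (ht : t ≤ 3) : T.pos (i + t) ∈ Sq T i :=
  mem_Sq.2 ⟨t, ht, rfl⟩

theorem Sq_subset {c : ℕ × ℕ} (hc : c ∈ Sq T i) : c ∈ Y := by
  obtain ⟨t, ht, rfl⟩ := mem_Sq.1 hc
  exact h.posm ht

theorem card_Sq : (Sq T i).card = 4 := by
  have h01 := h.pos_ne' (t := 0) (t' := 1) (by omega) (by omega) (by omega)
  have h02 := h.pos_ne' (t := 0) (t' := 2) (by omega) (by omega) (by omega)
  have h03 := h.pos_ne' (t := 0) (t' := 3) (by omega) (by omega) (by omega)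
  have h12 := h.pos_ne' (t := 1) (t' := 2) (by omega) (by omega) (by omega)
  have h13 := h.pos_ne' (t := 1) (t' := 3) (by omega) (by omega) (by omega)
  have h23 := h.pos_ne' (t := 2) (t' := 3) (by omega) (by omega) (by omega)
  simp only [Nat.add_zero] at h01 h02 h03
  rw [Sq]
  rw [Finset.card_insert_of_notMem (by simp [h01, h02, h03]),
    Finset.card_insert_of_notMem (by simp [h12, h13]),
    Finset.card_insert_of_notMem (by simp [h23]), Finset.card_singleton]

end Ctx

/-! ### The selector and value-relabeling for the forward map -/

noncomputable def selP (T : SYT Y) (i : ℕ) : ℕ × ℕ :=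
  if (T.pos (i+3)).1 = (T.pos i).1 then T.pos i
  else if (T.pos (i+3)).1 = (T.pos (i+1)).1 then T.pos (i+1)
  else if (T.pos (i+3)).1 = (T.pos (i+2)).1 then T.pos (i+2)
  else if (T.pos (i+3)).2 = (T.pos i).2 then T.pos i
  else if (T.pos (i+3)).2 = (T.pos (i+1)).2 then T.pos (i+1)
  else if (T.pos (i+3)).2 = (T.pos (i+2)).2 then T.pos (i+2)
  else T.pos (i+3)

noncomputable def EP (T : SYT Y) (i : ℕ) : Finset (ℕ × ℕ) := (Sq T i).erase (selP T i)

noncomputable def nvP (T : SYT Y) (i : ℕ) (c : ℕ × ℕ) : ℕ :=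
  if c = selP T i then i else i + 1 + rnk (EP T i) c

noncomputable def nuP (T : SYT Y) (i : ℕ) (k : ℕ) : ℕ :=
  if i ≤ k ∧ k ≤ i + 3 then nvP T i (T.pos k) else k

section selP

variable {T : SYT Y} {i : ℕ}

theorem selP_mem : selP T i ∈ Sq T i := by
  rw [selP]
  split_ifs <;> simp [Sq]

theorem selP_row0 (hr : (T.pos (i+3)).1 = (T.pos i).1) : selP T i = T.pos i := by
  rw [selP, if_pos hr]

theorem selP_row1 (hr01 : (T.pos i).1 < (T.pos (i+1)).1)
    (hr : (T.pos (i+3)).1 = (T.pos (i+1)).1) : selP T i = T.pos (i+1) := by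
  rw [selP, if_neg (by omega), if_pos hr]

theorem selP_row2 (hr01 : (T.pos i).1 < (T.pos (i+1)).1)
    (hr12 : (T.pos (i+1)).1 < (T.pos (i+2)).1)
    (hr : (T.pos (i+3)).1 = (T.pos (i+2)).1) : selP T i = T.pos (i+2) := by
  rw [selP, if_neg (by omega), if_neg (by omega), if_pos hr]

theorem selP_col0 (hn0 : ¬(T.pos (i+3)).1 = (T.pos i).1)
    (hn1 : ¬(T.pos (i+3)).1 = (T.pos (i+1)).1) (hn2 : ¬(T.pos (i+3)).1 = (T.pos (i+2)).1)
    (hc : (T.pos (i+3)).2 = (T.pos i).2) : selP T i = T.pos i := by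
  rw [selP, if_neg hn0, if_neg hn1, if_neg hn2, if_pos hc]

theorem selP_col1 (hn0 : ¬(T.pos (i+3)).1 = (T.pos i).1)
    (hn1 : ¬(T.pos (i+3)).1 = (T.pos (i+1)).1) (hn2 : ¬(T.pos (i+3)).1 = (T.pos (i+2)).1)
    (hc0 : ¬(T.pos (i+3)).2 = (T.pos i).2)
    (hc : (T.pos (i+3)).2 = (T.pos (i+1)).2) : selP T i = T.pos (i+1) := by
  rw [selP, if_neg hn0, if_neg hn1, if_neg hn2, if_neg hc0, if_pos hc]

theorem selP_col2 (hn0 : ¬(T.pos (i+3)).1 = (T.pos i).1)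
    (hn1 : ¬(T.pos (i+3)).1 = (T.pos (i+1)).1) (hn2 : ¬(T.pos (i+3)).1 = (T.pos (i+2)).1)
    (hc0 : ¬(T.pos (i+3)).2 = (T.pos i).2) (hc1 : ¬(T.pos (i+3)).2 = (T.pos (i+1)).2)
    (hc : (T.pos (i+3)).2 = (T.pos (i+2)).2) : selP T i = T.pos (i+2) := by
  rw [selP, if_neg hn0, if_neg hn1, if_neg hn2, if_neg hc0, if_neg hc1, if_pos hc]

theorem selP_self (hn0 : ¬(T.pos (i+3)).1 = (T.pos i).1)
    (hn1 : ¬(T.pos (i+3)).1 = (T.pos (i+1)).1) (hn2 : ¬(T.pos (i+3)).1 = (T.pos (i+2)).1)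
    (hc0 : ¬(T.pos (i+3)).2 = (T.pos i).2) (hc1 : ¬(T.pos (i+3)).2 = (T.pos (i+1)).2)
    (hc2 : ¬(T.pos (i+3)).2 = (T.pos (i+2)).2) : selP T i = T.pos (i+3) := by
  rw [selP, if_neg hn0, if_neg hn1, if_neg hn2, if_neg hc0, if_neg hc1, if_neg hc2]

theorem selP_ne_top (h : Ctx T i) {t : ℕ} (ht : t ≤ 2)
    (hm : (T.pos (i+3)).2 = (T.pos (i+t)).2) : selP T i ≠ T.pos (i + 3) := by
  have d03 := h.pos_ne' (t := 0) (t' := 3) (by omega) (by omega) (by omega)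
  have d13 := h.pos_ne' (t := 1) (t' := 3) (by omega) (by omega) (by omega)
  have d23 := h.pos_ne' (t := 2) (t' := 3) (by omega) (by omega) (by omega)
  simp only [Nat.add_zero] at d03
  rw [selP]
  split_ifs with h1 h2 h3 h4 h5 h6
  · exact d03
  · exact d13
  · exact d23
  · exact d03
  · exact d13
  · exact d23
  · exfalso
    interval_cases t
    · simp only [Nat.add_zero] at hm; exact h4 hm
    · exact h5 hm
    · exact h6 hm

/-- Any two distinct non-selected window cells have different rows. -/
theorem rowsInjP (h : Ctx T i)
    (hr01 : (T.pos i).1 < (T.pos (i+1)).1) (hr12 : (T.pos (i+1)).1 < (T.pos (i+2)).1)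
    {c d : ℕ × ℕ} (hc : c ∈ Sq T i) (hd : d ∈ Sq T i)
    (hcs : c ≠ selP T i) (hds : d ≠ selP T i) (hcd : c ≠ d) : c.1 ≠ d.1 := by
  obtain ⟨t, ht, rfl⟩ := Ctx.mem_Sq.1 hc
  obtain ⟨t', ht', rfl⟩ := Ctx.mem_Sq.1 hd
  have htt : t ≠ t' := by rintro rfl; exact hcd rfl
  have key : ∀ s ≤ 2, (T.pos (i+3)).1 = (T.pos (i+s)).1 → selP T i = T.pos (i+s) := by
    intro s hs hr
    interval_cases s
    · simpa using selP_row0 (by simpa using hr)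
    · exact selP_row1 hr01 hr
    · exact selP_row2 hr01 hr12 hr
  intro hrow
  have h3 : ∀ a b : ℕ, a < b → b ≤ 2 → (T.pos (i+a)).1 < (T.pos (i+b)).1 := by
    intro a b hab hb
    interval_cases b <;> interval_cases a <;> (try simp only [Nat.add_zero]) <;> omega
  by_cases he : t = 3
  · subst he
    have ht2 : t' ≤ 2 := by omega
    exact hds (key t' ht2 hrow).symm
  · by_cases he' : t' = 3
    · subst he'
      exact hcs (key t (by omega) hrow.symm).symm
    · rcases Nat.lt_or_ge t t' with H | H
      · have := h3 t t' H (by omega); omega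
      · have := h3 t' t (by omega) (by omega); omega
  
end selP


section nvP

variable {T : SYT Y} {i : ℕ}

theorem card_EP (h : Ctx T i) : (EP T i).card = 3 := by
  rw [EP, Finset.card_erase_of_mem selP_mem, h.card_Sq]

theorem nvP_sel : nvP T i (selP T i) = i := if_pos rfl

theorem nvP_of_ne {c : ℕ × ℕ} (hne : c ≠ selP T i) :
    nvP T i c = i + 1 + rnk (EP T i) c := if_neg hne

theorem mem_EP {c : ℕ × ℕ} : c ∈ EP T i ↔ c ∈ Sq T i ∧ c ≠ selP T i := by
  rw [EP, Finset.mem_erase]; tauto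

theorem nvP_bounds (h : Ctx T i) {c : ℕ × ℕ} (hc : c ∈ Sq T i) (hne : c ≠ selP T i) :
    i + 1 ≤ nvP T i c ∧ nvP T i c ≤ i + 3 := by
  rw [nvP_of_ne hne]
  have h1 : rnk (EP T i) c ≤ (EP T i).card - 1 := rnk_le (mem_EP.2 ⟨hc, hne⟩)
  rw [card_EP h] at h1
  omega

theorem nvP_ge (h : Ctx T i) {c : ℕ × ℕ} (hc : c ∈ Sq T i) : i ≤ nvP T i c := by
  by_cases hne : c = selP T i
  · rw [hne, nvP_sel]
  · exact le_trans (by omega) (nvP_bounds h hc hne).1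

theorem nvP_le (h : Ctx T i) {c : ℕ × ℕ} (hc : c ∈ Sq T i) : nvP T i c ≤ i + 3 := by
  by_cases hne : c = selP T i
  · rw [hne, nvP_sel]; omega
  · exact (nvP_bounds h hc hne).2

theorem nvP_mono (h : Ctx T i) {c d : ℕ × ℕ} (hc : c ∈ EP T i) (hd : d ∈ EP T i)
    (hrow : c.1 < d.1) : nvP T i c < nvP T i d := by
  rw [nvP_of_ne (mem_EP.1 hc).2, nvP_of_ne (mem_EP.1 hd).2]
  have := rnk_lt_rnk hc hrow
  omega

theorem nvP_lt_iff (h : Ctx T i)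
    (hr01 : (T.pos i).1 < (T.pos (i+1)).1) (hr12 : (T.pos (i+1)).1 < (T.pos (i+2)).1)
    {c d : ℕ × ℕ} (hc : c ∈ EP T i) (hd : d ∈ EP T i) (hne : c ≠ d) :
    c.1 < d.1 ↔ nvP T i c < nvP T i d := by
  constructor
  · exact nvP_mono h hc hd
  · intro hv
    rcases lt_trichotomy c.1 d.1 with h' | h' | h'
    · exact h'
    · exact absurd h' (rowsInjP h hr01 hr12 (mem_EP.1 hc).1 (mem_EP.1 hd).1
        (mem_EP.1 hc).2 (mem_EP.1 hd).2 hne)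
    · have := nvP_mono h hd hc h'; omega

theorem nvP_injOn (h : Ctx T i)
    (hr01 : (T.pos i).1 < (T.pos (i+1)).1) (hr12 : (T.pos (i+1)).1 < (T.pos (i+2)).1)
    {c d : ℕ × ℕ} (hc : c ∈ Sq T i) (hd : d ∈ Sq T i)
    (he : nvP T i c = nvP T i d) : c = d := by
  by_cases h1 : c = selP T i <;> by_cases h2 : d = selP T i
  · rw [h1, h2]
  · exfalso; rw [h1, nvP_sel] at he; have := (nvP_bounds h hd h2).1; omega
  · exfalso; rw [h2, nvP_sel] at he; have := (nvP_bounds h hc h1).1; omega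
  · by_contra hcd
    have hrne := rowsInjP h hr01 hr12 hc hd h1 h2 hcd
    rcases lt_trichotomy c.1 d.1 with h' | h' | h'
    · have := nvP_mono h (mem_EP.2 ⟨hc, h1⟩) (mem_EP.2 ⟨hd, h2⟩) h'; omega
    · exact hrne h'
    · have := nvP_mono h (mem_EP.2 ⟨hd, h2⟩) (mem_EP.2 ⟨hc, h1⟩) h'; omega

theorem nvP_surj (h : Ctx T i)
    (hr01 : (T.pos i).1 < (T.pos (i+1)).1) (hr12 : (T.pos (i+1)).1 < (T.pos (i+2)).1) :
    ∀ m, i ≤ m → m ≤ i + 3 → ∃ c ∈ Sq T i, nvP T i c = m := by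
  have himg : (Sq T i).image (nvP T i) = Finset.Icc i (i+3) := by
    apply Finset.eq_of_subset_of_card_le
    · intro m hm
      obtain ⟨c, hc, rfl⟩ := Finset.mem_image.1 hm
      exact Finset.mem_Icc.2 ⟨nvP_ge h hc, nvP_le h hc⟩
    · rw [Nat.card_Icc,
        Finset.card_image_of_injOn (fun c hc d hd => nvP_injOn h hr01 hr12 hc hd), h.card_Sq]
      omega
  intro m h1 h2
  have hm : m ∈ Finset.Icc i (i+3) := Finset.mem_Icc.2 ⟨h1, h2⟩
  rw [← himg] at hm
  obtain ⟨c, hc, hcv⟩ := Finset.mem_image.1 hm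
  exact ⟨c, hc, hcv⟩

end nvP

section nuP

variable {T : SYT Y} {i : ℕ}

theorem nuP_out {k : ℕ} (hk : ¬(i ≤ k ∧ k ≤ i + 3)) : nuP T i k = k := if_neg hk

theorem nuP_in {k : ℕ} (h1 : i ≤ k) (h2 : k ≤ i + 3) :
    nuP T i k = nvP T i (T.pos k) := if_pos ⟨h1, h2⟩

theorem pos_mem_Sq_of {k : ℕ} (h1 : i ≤ k) (h2 : k ≤ i + 3) : T.pos k ∈ Sq T i :=
  Ctx.mem_Sq.2 ⟨k - i, by omega, by rw [show i + (k - i) = k by omega]⟩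

theorem nuP_in_bounds (h : Ctx T i) {k : ℕ} (h1 : i ≤ k) (h2 : k ≤ i + 3) :
    i ≤ nuP T i k ∧ nuP T i k ≤ i + 3 := by
  rw [nuP_in h1 h2]
  exact ⟨nvP_ge h (pos_mem_Sq_of h1 h2), nvP_le h (pos_mem_Sq_of h1 h2)⟩

theorem nuP_zero (h : Ctx T i) : nuP T i 0 = 0 :=
  nuP_out (by have := h.h1; omega)

theorem entry_window_eq {k : ℕ} (hk : k ∈ Set.Icc 1 Y.card) {c : ℕ × ℕ} (hc : c ∈ Sq T i)
    (hpc : T.pos k = c) : T.entry c.1 c.2 = k := by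
  rw [← hpc]; exact T.entry_pos hk

theorem bijOn_nuP (h : Ctx T i)
    (hr01 : (T.pos i).1 < (T.pos (i+1)).1) (hr12 : (T.pos (i+1)).1 < (T.pos (i+2)).1) :
    Set.BijOn (nuP T i) (Set.Icc 1 Y.card) (Set.Icc 1 Y.card) := by
  have hh1 := h.h1
  have hh2 := h.h2
  refine ⟨?_, ?_, ?_⟩
  · intro k hk
    by_cases hw : i ≤ k ∧ k ≤ i + 3
    · have := nuP_in_bounds h hw.1 hw.2
      exact ⟨by omega, by omega⟩
    · rw [nuP_out hw]; exact hk
  · intro a ha b hb he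
    by_cases hwa : i ≤ a ∧ a ≤ i + 3 <;> by_cases hwb : i ≤ b ∧ b ≤ i + 3
    · rw [nuP_in hwa.1 hwa.2, nuP_in hwb.1 hwb.2] at he
      have := nvP_injOn h hr01 hr12 (pos_mem_Sq_of hwa.1 hwa.2) (pos_mem_Sq_of hwb.1 hwb.2) he
      have ha' := T.entry_pos (k := a) ⟨ha.1, ha.2⟩
      have hb' := T.entry_pos (k := b) ⟨hb.1, hb.2⟩
      rw [← ha', ← hb', this]
    · exfalso
      have := nuP_in_bounds h hwa.1 hwa.2
      rw [nuP_out hwb] at he; omega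
    · exfalso
      have := nuP_in_bounds h hwb.1 hwb.2
      rw [nuP_out hwa] at he; omega
    · rw [nuP_out hwa, nuP_out hwb] at he; exact he
  · intro m hm
    by_cases hw : i ≤ m ∧ m ≤ i + 3
    · obtain ⟨c, hcS, hcv⟩ := nvP_surj h hr01 hr12 m hw.1 hw.2
      obtain ⟨t, ht, rfl⟩ := Ctx.mem_Sq.1 hcS
      refine ⟨i + t, ⟨by omega, by omega⟩, ?_⟩
      have hpe : T.pos (i + t) = T.pos (i + t) := rfl
      rw [nuP_in (by omega) (by omega)]
      exact hcv
    · exact ⟨m, hm, nuP_out hw⟩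

end nuP

/-! ### Building an SYT from a relabeling -/

theorem relabel_row_strict (T : SYT Y) (g : ℕ → ℕ)
    (hadj : ∀ a b : ℕ, (a, b + 1) ∈ Y → g (T.entry a b) < g (T.entry a (b + 1))) :
    ∀ ⦃a j1 j2 : ℕ⦄, j1 < j2 → (a, j2) ∈ Y → g (T.entry a j1) < g (T.entry a j2) := by
  intro a j1 j2 hj hm
  obtain ⟨t, rfl⟩ : ∃ t, j2 = j1 + t + 1 := ⟨j2 - j1 - 1, by omega⟩
  clear hj
  induction t with
  | zero => exact hadj a j1 hm
  | succ t ih =>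
    have hm' : (a, j1 + t + 1) ∈ Y := Y.up_left_mem le_rfl (by omega) hm
    exact (ih hm').trans (hadj a (j1 + t + 1) hm)

theorem relabel_col_strict (T : SYT Y) (g : ℕ → ℕ)
    (hadj : ∀ a b : ℕ, (a + 1, b) ∈ Y → g (T.entry a b) < g (T.entry (a + 1) b)) :
    ∀ ⦃a1 a2 b : ℕ⦄, a1 < a2 → (a2, b) ∈ Y → g (T.entry a1 b) < g (T.entry a2 b) := by
  intro a1 a2 b hj hm
  obtain ⟨t, rfl⟩ : ∃ t, a2 = a1 + t + 1 := ⟨a2 - a1 - 1, by omega⟩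
  clear hj
  induction t with
  | zero => exact hadj a1 b hm
  | succ t ih =>
    have hm' : (a1 + t + 1, b) ∈ Y := Y.up_left_mem (by omega) le_rfl hm
    exact (ih hm').trans (hadj (a1 + t + 1) b hm)


/-! ### The key adjacency lemmas for the forward map -/

section keyP

variable {T : SYT Y} {i : ℕ}

theorem rowsq (hr01 : (T.pos i).1 < (T.pos (i+1)).1) (hr12 : (T.pos (i+1)).1 < (T.pos (i+2)).1) :
    ∀ a b : ℕ, a < b → b ≤ 2 → (T.pos (i+a)).1 < (T.pos (i+b)).1 := by
  intro a b hab hb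
  interval_cases b <;> interval_cases a <;> (try simp only [Nat.add_zero]) <;> omega

theorem selP_cases1 (h : Ctx T i) (hsel : selP T i = T.pos (i+1)) :
    (T.pos (i+3)).1 = (T.pos (i+1)).1 ∨
      ((T.pos (i+3)).2 = (T.pos (i+1)).2 ∧ ¬(T.pos (i+3)).2 = (T.pos i).2) := by
  have d01 := h.pos_ne' (t := 0) (t' := 1) (by omega) (by omega) (by omega)
  have d12 := h.pos_ne' (t := 1) (t' := 2) (by omega) (by omega) (by omega)
  have d13 := h.pos_ne' (t := 1) (t' := 3) (by omega) (by omega) (by omega)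
  simp only [Nat.add_zero] at d01
  rw [selP] at hsel
  split_ifs at hsel with h1 h2 h3 h4 h5 h6
  · exact absurd hsel d01
  · exact Or.inl h2
  · exact absurd hsel.symm d12
  · exact absurd hsel d01
  · exact Or.inr ⟨h5, h4⟩
  · exact absurd hsel.symm d12
  · exact absurd hsel d13.symm

theorem selP_cases2 (h : Ctx T i) (hsel : selP T i = T.pos (i+2)) :
    (T.pos (i+3)).1 = (T.pos (i+2)).1 ∨
      ((T.pos (i+3)).2 = (T.pos (i+2)).2 ∧ ¬(T.pos (i+3)).2 = (T.pos (i+1)).2) := by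
  have d02 := h.pos_ne' (t := 0) (t' := 2) (by omega) (by omega) (by omega)
  have d12 := h.pos_ne' (t := 1) (t' := 2) (by omega) (by omega) (by omega)
  have d23 := h.pos_ne' (t := 2) (t' := 3) (by omega) (by omega) (by omega)
  simp only [Nat.add_zero] at d02
  rw [selP] at hsel
  split_ifs at hsel with h1 h2 h3 h4 h5 h6
  · exact absurd hsel d02
  · exact absurd hsel d12
  · exact Or.inl h3
  · exact absurd hsel d02
  · exact absurd hsel d12
  · exact Or.inr ⟨h6, h5⟩
  · exact absurd hsel d23.symm

/-- The geometric contradiction: the selector cannot pick the lower of two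
vertically adjacent window cells holding `i+a` above `i+a+1`. -/
theorem contraP (h : Ctx T i)
    (hr01 : (T.pos i).1 < (T.pos (i+1)).1) (hr12 : (T.pos (i+1)).1 < (T.pos (i+2)).1)
    {a : ℕ} (ha : a ≤ 1)
    (hradj : (T.pos (i+(a+1))).1 = (T.pos (i+a)).1 + 1)
    (hcadj : (T.pos (i+(a+1))).2 = (T.pos (i+a)).2)
    (hsel : selP T i = T.pos (i+(a+1))) : False := by
  have e0 := h.entry_posm (t := 0) (by omega)
  have e1 := h.entry_posm (t := 1) (by omega)
  have e2 := h.entry_posm (t := 2) (by omega)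
  have e3 := h.entry_posm (t := 3) (by omega)
  simp only [Nat.add_zero] at e0
  have hrY : (T.pos (i+3)) ∈ Y := h.posm (t := 3) (by omega)
  interval_cases a
  · -- a = 0 : cells of i and i+1 vertically adjacent, selector picked cell of i+1
    simp only [Nat.reduceAdd, Nat.add_zero] at hradj hcadj hsel
    rcases selP_cases1 h hsel with hr | ⟨hc1, hc2⟩
    · -- row branch : r in the row of the cell of i+1
      -- first : (pos (i+1)).2 < (pos (i+3)).2
      have hd : (T.pos (i+1)).2 < (T.pos (i+3)).2 := by
        apply T.col_lt_of_row_eq (h.posm (t := 1) (by omega)) hrY hr.symm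
        rw [e1, e3]; omega
      -- the cell w = ((pos i).1, (pos (i+3)).2)
      have hwY : ((T.pos i).1, (T.pos (i+3)).2) ∈ Y := by
        apply Y.up_left_mem (show (T.pos i).1 ≤ (T.pos (i+3)).1 by omega) le_rfl
        simpa using hrY
      have h_lo : T.entry (T.pos i).1 (T.pos i).2 < T.entry (T.pos i).1 (T.pos (i+3)).2 :=
        T.row_strict (by omega) hwY
      have h_hi : T.entry (T.pos i).1 (T.pos (i+3)).2
          < T.entry (T.pos (i+3)).1 (T.pos (i+3)).2 :=
        T.col_strict (by omega) (by simpa using hrY)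
      rw [e0] at h_lo
      rw [e3] at h_hi
      have hp := T.pos_eq_of hwY (rfl :
        T.entry (T.pos i).1 (T.pos (i+3)).2 = T.entry (T.pos i).1 (T.pos (i+3)).2)
      have hcases : T.entry (T.pos i).1 (T.pos (i+3)).2 = i + 1 ∨
          T.entry (T.pos i).1 (T.pos (i+3)).2 = i + 2 := by omega
      rcases hcases with he | he
      · rw [he] at hp
        have := congrArg Prod.fst hp
        simp only at this
        omega
      · rw [he] at hp
        have := congrArg Prod.fst hp
        simp only at this
        omega
    · omega
  · -- a = 1 : cells of i+1 and i+2 vertically adjacent, selector picked cell of i+2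
    simp only [Nat.reduceAdd] at hradj hcadj hsel
    rcases selP_cases2 h hsel with hr | ⟨hc1, hc2⟩
    · have hd : (T.pos (i+2)).2 < (T.pos (i+3)).2 := by
        apply T.col_lt_of_row_eq (h.posm (t := 2) (by omega)) hrY hr.symm
        rw [e2, e3]; omega
      have hwY : ((T.pos (i+1)).1, (T.pos (i+3)).2) ∈ Y := by
        apply Y.up_left_mem (show (T.pos (i+1)).1 ≤ (T.pos (i+3)).1 by omega) le_rfl
        simpa using hrY
      have h_lo : T.entry (T.pos (i+1)).1 (T.pos (i+1)).2
          < T.entry (T.pos (i+1)).1 (T.pos (i+3)).2 :=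
        T.row_strict (by omega) hwY
      have h_hi : T.entry (T.pos (i+1)).1 (T.pos (i+3)).2
          < T.entry (T.pos (i+3)).1 (T.pos (i+3)).2 :=
        T.col_strict (by omega) (by simpa using hrY)
      rw [e1] at h_lo
      rw [e3] at h_hi
      have hp := T.pos_eq_of hwY (rfl :
        T.entry (T.pos (i+1)).1 (T.pos (i+3)).2 = T.entry (T.pos (i+1)).1 (T.pos (i+3)).2)
      have he : T.entry (T.pos (i+1)).1 (T.pos (i+3)).2 = i + 2 := by omega
      rw [he] at hp
      have := congrArg Prod.fst hp
      simp only at this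
      omega
    · omega

/-- The key lemma : the relabeling respects window values in adjacent cells. -/
theorem keyP (h : Ctx T i)
    (hr01 : (T.pos i).1 < (T.pos (i+1)).1) (hr12 : (T.pos (i+1)).1 < (T.pos (i+2)).1)
    {u v : ℕ} (hu : i ≤ u) (hv : v ≤ i + 3) (huv : u < v)
    (hadj : ((T.pos v).1 = (T.pos u).1 ∧ (T.pos v).2 = (T.pos u).2 + 1) ∨
            ((T.pos v).1 = (T.pos u).1 + 1 ∧ (T.pos v).2 = (T.pos u).2)) :
    nvP T i (T.pos u) < nvP T i (T.pos v) := by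
  obtain ⟨a, rfl⟩ : ∃ a, u = i + a := ⟨u - i, by omega⟩
  obtain ⟨b, rfl⟩ : ∃ b, v = i + b := ⟨v - i + a - a, by omega⟩
  have hab : a < b := by omega
  have hb3 : b ≤ 3 := by omega
  have huS : T.pos (i+a) ∈ Sq T i := Ctx.pos_mem_Sq (by omega)
  have hvS : T.pos (i+b) ∈ Sq T i := Ctx.pos_mem_Sq (by omega)
  have hne_uv : T.pos (i+a) ≠ T.pos (i+b) := h.pos_ne' (by omega) (by omega) (by omega)
  rcases hadj with ⟨h1, h2⟩ | ⟨h1, h2⟩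
  · -- horizontal adjacency : same row.  Forces b = 3 and selector = row branch.
    have hb : b = 3 := by
      by_contra hb
      have := rowsq hr01 hr12 a b hab (by omega)
      omega
    subst hb
    have hsel : selP T i = T.pos (i+a) := by
      have ha2 : a ≤ 2 := by omega
      interval_cases a
      · simpa using selP_row0 (by simpa using h1)
      · exact selP_row1 hr01 h1
      · exact selP_row2 hr01 hr12 h1
    rw [← hsel, nvP_sel]
    have hvne : T.pos (i+3) ≠ selP T i := by rw [hsel]; exact hne_uv.symm
    exact (nvP_bounds h hvS hvne).1
  · -- vertical adjacency
    by_cases hsc : selP T i = T.pos (i+a)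
    · rw [← hsc, nvP_sel]
      have hvne : T.pos (i+b) ≠ selP T i := by rw [hsc]; exact hne_uv.symm
      exact (nvP_bounds h hvS hvne).1
    · by_cases hb : b = 3
      · subst hb
        have hne_top : selP T i ≠ T.pos (i+3) :=
          selP_ne_top h (t := a) (by omega) h2
        have hcE : T.pos (i+a) ∈ EP T i := mem_EP.2 ⟨huS, fun he => hsc he.symm⟩
        have hdE : T.pos (i+3) ∈ EP T i := mem_EP.2 ⟨hvS, fun he => hne_top he.symm⟩
        exact nvP_mono h hcE hdE (by omega)
      · -- both cells are among the three lower window cells ; b = a + 1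
        have hb1 : b = a + 1 := by
          by_contra hb1
          have hA := rowsq hr01 hr12 a (a+1) (by omega) (by omega)
          have hB := rowsq hr01 hr12 (a+1) b (by omega) (by omega)
          omega
        subst hb1
        by_cases hsd : selP T i = T.pos (i+(a+1))
        · exact absurd hsd (by
            intro hsd'
            exact contraP h hr01 hr12 (show a ≤ 1 by omega) h1 h2 hsd')
        · have hcE : T.pos (i+a) ∈ EP T i := mem_EP.2 ⟨huS, fun he => hsc he.symm⟩
          have hdE : T.pos (i+(a+1)) ∈ EP T i := mem_EP.2 ⟨hvS, fun he => hsd he.symm⟩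
          exact nvP_mono h hcE hdE (by omega)

end keyP


/-! ### The forward map φ -/

section phi

variable {T : SYT Y} {i : ℕ}

theorem hstepP_row (h : Ctx T i)
    (hr01 : (T.pos i).1 < (T.pos (i+1)).1) (hr12 : (T.pos (i+1)).1 < (T.pos (i+2)).1) :
    ∀ a b : ℕ, (a, b + 1) ∈ Y →
      nuP T i (T.entry a b) < nuP T i (T.entry a (b + 1)) := by
  intro a b hm1
  have hm0 : (a, b) ∈ Y := Y.up_left_mem le_rfl (by omega) hm1
  have huv : T.entry a b < T.entry a (b+1) := T.row_strict (by omega) hm1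
  have hu := T.entry_mem hm0
  have hv := T.entry_mem hm1
  by_cases hwu : i ≤ T.entry a b ∧ T.entry a b ≤ i + 3 <;>
    by_cases hwv : i ≤ T.entry a (b+1) ∧ T.entry a (b+1) ≤ i + 3
  · rw [nuP_in hwu.1 hwu.2, nuP_in hwv.1 hwv.2]
    apply keyP h hr01 hr12 hwu.1 hwv.2 huv
    left
    rw [T.pos_eq_of hm0 rfl, T.pos_eq_of hm1 rfl]
    exact ⟨rfl, rfl⟩
  · have h1 := nuP_in_bounds h hwu.1 hwu.2
    rw [nuP_out hwv]
    omega
  · have h1 := nuP_in_bounds h hwv.1 hwv.2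
    rw [nuP_out hwu]
    omega
  · rw [nuP_out hwu, nuP_out hwv]; exact huv

theorem hstepP_col (h : Ctx T i)
    (hr01 : (T.pos i).1 < (T.pos (i+1)).1) (hr12 : (T.pos (i+1)).1 < (T.pos (i+2)).1) :
    ∀ a b : ℕ, (a + 1, b) ∈ Y →
      nuP T i (T.entry a b) < nuP T i (T.entry (a + 1) b) := by
  intro a b hm1
  have hm0 : (a, b) ∈ Y := Y.up_left_mem (by omega) le_rfl hm1
  have huv : T.entry a b < T.entry (a+1) b := T.col_strict (by omega) hm1
  have hu := T.entry_mem hm0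
  have hv := T.entry_mem hm1
  by_cases hwu : i ≤ T.entry a b ∧ T.entry a b ≤ i + 3 <;>
    by_cases hwv : i ≤ T.entry (a+1) b ∧ T.entry (a+1) b ≤ i + 3
  · rw [nuP_in hwu.1 hwu.2, nuP_in hwv.1 hwv.2]
    apply keyP h hr01 hr12 hwu.1 hwv.2 huv
    right
    rw [T.pos_eq_of hm0 rfl, T.pos_eq_of hm1 rfl]
    exact ⟨rfl, rfl⟩
  · have h1 := nuP_in_bounds h hwu.1 hwu.2
    rw [nuP_out hwv]
    omega
  · have h1 := nuP_in_bounds h hwv.1 hwv.2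
    rw [nuP_out hwu]
    omega
  · rw [nuP_out hwu, nuP_out hwv]; exact huv

end phi

/-- The forward map : relabel the window values according to `nuP`. -/
noncomputable def phi (T : SYT Y) (i : ℕ) (h : Ctx T i)
    (hr01 : (T.pos i).1 < (T.pos (i+1)).1) (hr12 : (T.pos (i+1)).1 < (T.pos (i+2)).1) :
    SYT Y where
  entry a b := nuP T i (T.entry a b)
  bijOn := (bijOn_nuP h hr01 hr12).comp T.bijOn
  row_strict := fun _ _ _ hj hm =>
    relabel_row_strict T (nuP T i) (hstepP_row h hr01 hr12) hj hm
  col_strict := fun _ _ _ hj hm =>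
    relabel_col_strict T (nuP T i) (hstepP_col h hr01 hr12) hj hm
  zeros := fun a b hm => by
    show nuP T i (T.entry a b) = 0
    rw [T.zeros hm]
    exact nuP_zero h

section phiProps

variable {T : SYT Y} {i : ℕ} (h : Ctx T i)
  (hr01 : (T.pos i).1 < (T.pos (i+1)).1) (hr12 : (T.pos (i+1)).1 < (T.pos (i+2)).1)

theorem phi_entry (a b : ℕ) :
    (phi T i h hr01 hr12).entry a b = nuP T i (T.entry a b) := rfl

include h in
theorem phi_entry_cell {c : ℕ × ℕ} (hc : c ∈ Sq T i) :
    (phi T i h hr01 hr12).entry c.1 c.2 = nvP T i c := by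
  obtain ⟨t, ht, rfl⟩ := Ctx.mem_Sq.1 hc
  rw [phi_entry, h.entry_posm ht, nuP_in (by omega) (by omega)]

include h hr01 hr12 in
theorem phi_descents :
    (phi T i h hr01 hr12).IsDescent (i+1) ∧ (phi T i h hr01 hr12).IsDescent (i+2) := by
  obtain ⟨c1, hc1S, hc1⟩ := nvP_surj h hr01 hr12 (i+1) (by omega) (by omega)
  obtain ⟨c2, hc2S, hc2⟩ := nvP_surj h hr01 hr12 (i+2) (by omega) (by omega)
  obtain ⟨c3, hc3S, hc3⟩ := nvP_surj h hr01 hr12 (i+3) (by omega) (by omega)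
  have hne1 : c1 ≠ selP T i := fun he => by rw [he, nvP_sel] at hc1; omega
  have hne2 : c2 ≠ selP T i := fun he => by rw [he, nvP_sel] at hc2; omega
  have hne3 : c3 ≠ selP T i := fun he => by rw [he, nvP_sel] at hc3; omega
  have h12 : c1.1 < c2.1 := by
    apply (nvP_lt_iff h hr01 hr12 (mem_EP.2 ⟨hc1S, hne1⟩) (mem_EP.2 ⟨hc2S, hne2⟩)
      (fun he => by rw [he, hc2] at hc1; omega)).2
    omega
  have h23 : c2.1 < c3.1 := by
    apply (nvP_lt_iff h hr01 hr12 (mem_EP.2 ⟨hc2S, hne2⟩) (mem_EP.2 ⟨hc3S, hne3⟩)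
      (fun he => by rw [he, hc3] at hc2; omega)).2
    omega
  constructor
  · exact ⟨c1, by simpa [YoungDiagram.mem_cells] using h.Sq_subset hc1S, c2,
      by simpa [YoungDiagram.mem_cells] using h.Sq_subset hc2S,
      by rw [phi_entry_cell h hr01 hr12 hc1S]; exact hc1,
      by rw [phi_entry_cell h hr01 hr12 hc2S]; rw [hc2], h12⟩
  · exact ⟨c2, by simpa [YoungDiagram.mem_cells] using h.Sq_subset hc2S, c3,
      by simpa [YoungDiagram.mem_cells] using h.Sq_subset hc3S,
      by rw [phi_entry_cell h hr01 hr12 hc2S]; exact hc2,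
      by rw [phi_entry_cell h hr01 hr12 hc3S]; rw [hc3], h23⟩

end phiProps


/-! ### The backward map ψ : mirrored construction -/

noncomputable def selQ (T : SYT Y) (i : ℕ) : ℕ × ℕ :=
  if (T.pos i).1 = (T.pos (i+1)).1 then T.pos (i+1)
  else if (T.pos i).1 = (T.pos (i+2)).1 then T.pos (i+2)
  else if (T.pos i).1 = (T.pos (i+3)).1 then T.pos (i+3)
  else if (T.pos i).2 = (T.pos (i+3)).2 then T.pos (i+3)
  else if (T.pos i).2 = (T.pos (i+2)).2 then T.pos (i+2)
  else if (T.pos i).2 = (T.pos (i+1)).2 then T.pos (i+1)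
  else T.pos i

noncomputable def EQ (T : SYT Y) (i : ℕ) : Finset (ℕ × ℕ) := (Sq T i).erase (selQ T i)

noncomputable def nvQ (T : SYT Y) (i : ℕ) (c : ℕ × ℕ) : ℕ :=
  if c = selQ T i then i + 3 else i + rnk (EQ T i) c

noncomputable def nuQ (T : SYT Y) (i : ℕ) (k : ℕ) : ℕ :=
  if i ≤ k ∧ k ≤ i + 3 then nvQ T i (T.pos k) else k

section selQ

variable {T : SYT Y} {i : ℕ}

theorem selQ_mem : selQ T i ∈ Sq T i := by
  rw [selQ]
  split_ifs <;> simp [Sq]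

theorem selQ_row1 (hr : (T.pos i).1 = (T.pos (i+1)).1) : selQ T i = T.pos (i+1) := by
  rw [selQ, if_pos hr]

theorem selQ_row2 (hr12 : (T.pos (i+1)).1 < (T.pos (i+2)).1)
    (hr : (T.pos i).1 = (T.pos (i+2)).1) : selQ T i = T.pos (i+2) := by
  rw [selQ, if_neg (by omega), if_pos hr]

theorem selQ_row3 (hr12 : (T.pos (i+1)).1 < (T.pos (i+2)).1)
    (hr23 : (T.pos (i+2)).1 < (T.pos (i+3)).1)
    (hr : (T.pos i).1 = (T.pos (i+3)).1) : selQ T i = T.pos (i+3) := by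
  rw [selQ, if_neg (by omega), if_neg (by omega), if_pos hr]

theorem selQ_col3 (hn1 : ¬(T.pos i).1 = (T.pos (i+1)).1)
    (hn2 : ¬(T.pos i).1 = (T.pos (i+2)).1) (hn3 : ¬(T.pos i).1 = (T.pos (i+3)).1)
    (hc : (T.pos i).2 = (T.pos (i+3)).2) : selQ T i = T.pos (i+3) := by
  rw [selQ, if_neg hn1, if_neg hn2, if_neg hn3, if_pos hc]

theorem selQ_col2 (hn1 : ¬(T.pos i).1 = (T.pos (i+1)).1)
    (hn2 : ¬(T.pos i).1 = (T.pos (i+2)).1) (hn3 : ¬(T.pos i).1 = (T.pos (i+3)).1)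
    (hc3 : ¬(T.pos i).2 = (T.pos (i+3)).2)
    (hc : (T.pos i).2 = (T.pos (i+2)).2) : selQ T i = T.pos (i+2) := by
  rw [selQ, if_neg hn1, if_neg hn2, if_neg hn3, if_neg hc3, if_pos hc]

theorem selQ_col1 (hn1 : ¬(T.pos i).1 = (T.pos (i+1)).1)
    (hn2 : ¬(T.pos i).1 = (T.pos (i+2)).1) (hn3 : ¬(T.pos i).1 = (T.pos (i+3)).1)
    (hc3 : ¬(T.pos i).2 = (T.pos (i+3)).2) (hc2 : ¬(T.pos i).2 = (T.pos (i+2)).2)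
    (hc : (T.pos i).2 = (T.pos (i+1)).2) : selQ T i = T.pos (i+1) := by
  rw [selQ, if_neg hn1, if_neg hn2, if_neg hn3, if_neg hc3, if_neg hc2, if_pos hc]

theorem selQ_self (hn1 : ¬(T.pos i).1 = (T.pos (i+1)).1)
    (hn2 : ¬(T.pos i).1 = (T.pos (i+2)).1) (hn3 : ¬(T.pos i).1 = (T.pos (i+3)).1)
    (hc3 : ¬(T.pos i).2 = (T.pos (i+3)).2) (hc2 : ¬(T.pos i).2 = (T.pos (i+2)).2)
    (hc1 : ¬(T.pos i).2 = (T.pos (i+1)).2) : selQ T i = T.pos i := by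
  rw [selQ, if_neg hn1, if_neg hn2, if_neg hn3, if_neg hc3, if_neg hc2, if_neg hc1]

theorem selQ_ne_bot (h : Ctx T i) {t : ℕ} (ht1 : 1 ≤ t) (ht : t ≤ 3)
    (hm : (T.pos i).2 = (T.pos (i+t)).2) : selQ T i ≠ T.pos i := by
  have d01 := h.pos_ne' (t := 0) (t' := 1) (by omega) (by omega) (by omega)
  have d02 := h.pos_ne' (t := 0) (t' := 2) (by omega) (by omega) (by omega)
  have d03 := h.pos_ne' (t := 0) (t' := 3) (by omega) (by omega) (by omega)
  simp only [Nat.add_zero] at d01 d02 d03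
  rw [selQ]
  split_ifs with h1 h2 h3 h4 h5 h6
  · exact d01.symm
  · exact d02.symm
  · exact d03.symm
  · exact d03.symm
  · exact d02.symm
  · exact d01.symm
  · exfalso
    interval_cases t
    · exact h6 hm
    · exact h5 hm
    · exact h4 hm

theorem rowsqQ (hr12 : (T.pos (i+1)).1 < (T.pos (i+2)).1)
    (hr23 : (T.pos (i+2)).1 < (T.pos (i+3)).1) :
    ∀ a b : ℕ, 1 ≤ a → a < b → b ≤ 3 → (T.pos (i+a)).1 < (T.pos (i+b)).1 := by
  intro a b ha hab hb
  interval_cases b <;> interval_cases a <;> omega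

theorem rowsInjQ (h : Ctx T i)
    (hr12 : (T.pos (i+1)).1 < (T.pos (i+2)).1) (hr23 : (T.pos (i+2)).1 < (T.pos (i+3)).1)
    {c d : ℕ × ℕ} (hc : c ∈ Sq T i) (hd : d ∈ Sq T i)
    (hcs : c ≠ selQ T i) (hds : d ≠ selQ T i) (hcd : c ≠ d) : c.1 ≠ d.1 := by
  obtain ⟨t, ht, rfl⟩ := Ctx.mem_Sq.1 hc
  obtain ⟨t', ht', rfl⟩ := Ctx.mem_Sq.1 hd
  have htt : t ≠ t' := by rintro rfl; exact hcd rfl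
  have key : ∀ s, 1 ≤ s → s ≤ 3 → (T.pos i).1 = (T.pos (i+s)).1 → selQ T i = T.pos (i+s) := by
    intro s hs1 hs hr
    interval_cases s
    · exact selQ_row1 hr
    · exact selQ_row2 hr12 hr
    · exact selQ_row3 hr12 hr23 hr
  intro hrow
  by_cases he : t = 0
  · subst he
    have ht1 : 1 ≤ t' := by omega
    simp only [Nat.add_zero] at hrow
    exact hds (key t' ht1 (by omega) hrow).symm
  · by_cases he' : t' = 0
    · subst he'
      simp only [Nat.add_zero] at hrow
      exact hcs (key t (by omega) (by omega) hrow.symm).symm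
    · rcases Nat.lt_or_ge t t' with H | H
      · have := rowsqQ hr12 hr23 t t' (by omega) H (by omega); omega
      · have := rowsqQ hr12 hr23 t' t (by omega) (by omega) (by omega); omega

end selQ

section nvQ

variable {T : SYT Y} {i : ℕ}

theorem card_EQ (h : Ctx T i) : (EQ T i).card = 3 := by
  rw [EQ, Finset.card_erase_of_mem selQ_mem, h.card_Sq]

theorem nvQ_sel : nvQ T i (selQ T i) = i + 3 := if_pos rfl

theorem nvQ_of_ne {c : ℕ × ℕ} (hne : c ≠ selQ T i) :
    nvQ T i c = i + rnk (EQ T i) c := if_neg hne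

theorem mem_EQ {c : ℕ × ℕ} : c ∈ EQ T i ↔ c ∈ Sq T i ∧ c ≠ selQ T i := by
  rw [EQ, Finset.mem_erase]; tauto

theorem nvQ_bounds (h : Ctx T i) {c : ℕ × ℕ} (hc : c ∈ Sq T i) (hne : c ≠ selQ T i) :
    i ≤ nvQ T i c ∧ nvQ T i c ≤ i + 2 := by
  rw [nvQ_of_ne hne]
  have h1 : rnk (EQ T i) c ≤ (EQ T i).card - 1 := rnk_le (mem_EQ.2 ⟨hc, hne⟩)
  rw [card_EQ h] at h1
  omega

theorem nvQ_ge (h : Ctx T i) {c : ℕ × ℕ} (hc : c ∈ Sq T i) : i ≤ nvQ T i c := by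
  by_cases hne : c = selQ T i
  · rw [hne, nvQ_sel]; omega
  · exact (nvQ_bounds h hc hne).1

theorem nvQ_le (h : Ctx T i) {c : ℕ × ℕ} (hc : c ∈ Sq T i) : nvQ T i c ≤ i + 3 := by
  by_cases hne : c = selQ T i
  · rw [hne, nvQ_sel]
  · exact le_trans (nvQ_bounds h hc hne).2 (by omega)

theorem nvQ_mono (h : Ctx T i) {c d : ℕ × ℕ} (hc : c ∈ EQ T i) (hd : d ∈ EQ T i)
    (hrow : c.1 < d.1) : nvQ T i c < nvQ T i d := by
  rw [nvQ_of_ne (mem_EQ.1 hc).2, nvQ_of_ne (mem_EQ.1 hd).2]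
  have := rnk_lt_rnk hc hrow
  omega

theorem nvQ_lt_iff (h : Ctx T i)
    (hr12 : (T.pos (i+1)).1 < (T.pos (i+2)).1) (hr23 : (T.pos (i+2)).1 < (T.pos (i+3)).1)
    {c d : ℕ × ℕ} (hc : c ∈ EQ T i) (hd : d ∈ EQ T i) (hne : c ≠ d) :
    c.1 < d.1 ↔ nvQ T i c < nvQ T i d := by
  constructor
  · exact nvQ_mono h hc hd
  · intro hv
    rcases lt_trichotomy c.1 d.1 with h' | h' | h'
    · exact h'
    · exact absurd h' (rowsInjQ h hr12 hr23 (mem_EQ.1 hc).1 (mem_EQ.1 hd).1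
        (mem_EQ.1 hc).2 (mem_EQ.1 hd).2 hne)
    · have := nvQ_mono h hd hc h'; omega

theorem nvQ_injOn (h : Ctx T i)
    (hr12 : (T.pos (i+1)).1 < (T.pos (i+2)).1) (hr23 : (T.pos (i+2)).1 < (T.pos (i+3)).1)
    {c d : ℕ × ℕ} (hc : c ∈ Sq T i) (hd : d ∈ Sq T i)
    (he : nvQ T i c = nvQ T i d) : c = d := by
  by_cases h1 : c = selQ T i <;> by_cases h2 : d = selQ T i
  · rw [h1, h2]
  · exfalso; rw [h1, nvQ_sel] at he; have := (nvQ_bounds h hd h2).2; omega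
  · exfalso; rw [h2, nvQ_sel] at he; have := (nvQ_bounds h hc h1).2; omega
  · by_contra hcd
    have hrne := rowsInjQ h hr12 hr23 hc hd h1 h2 hcd
    rcases lt_trichotomy c.1 d.1 with h' | h' | h'
    · have := nvQ_mono h (mem_EQ.2 ⟨hc, h1⟩) (mem_EQ.2 ⟨hd, h2⟩) h'; omega
    · exact hrne h'
    · have := nvQ_mono h (mem_EQ.2 ⟨hd, h2⟩) (mem_EQ.2 ⟨hc, h1⟩) h'; omega

theorem nvQ_surj (h : Ctx T i)
    (hr12 : (T.pos (i+1)).1 < (T.pos (i+2)).1) (hr23 : (T.pos (i+2)).1 < (T.pos (i+3)).1) :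
    ∀ m, i ≤ m → m ≤ i + 3 → ∃ c ∈ Sq T i, nvQ T i c = m := by
  have himg : (Sq T i).image (nvQ T i) = Finset.Icc i (i+3) := by
    apply Finset.eq_of_subset_of_card_le
    · intro m hm
      obtain ⟨c, hc, rfl⟩ := Finset.mem_image.1 hm
      exact Finset.mem_Icc.2 ⟨nvQ_ge h hc, nvQ_le h hc⟩
    · rw [Nat.card_Icc,
        Finset.card_image_of_injOn (fun c hc d hd => nvQ_injOn h hr12 hr23 hc hd), h.card_Sq]
      omega
  intro m h1 h2
  have hm : m ∈ Finset.Icc i (i+3) := Finset.mem_Icc.2 ⟨h1, h2⟩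
  rw [← himg] at hm
  obtain ⟨c, hc, hcv⟩ := Finset.mem_image.1 hm
  exact ⟨c, hc, hcv⟩

end nvQ

section nuQ

variable {T : SYT Y} {i : ℕ}

theorem nuQ_out {k : ℕ} (hk : ¬(i ≤ k ∧ k ≤ i + 3)) : nuQ T i k = k := if_neg hk

theorem nuQ_in {k : ℕ} (h1 : i ≤ k) (h2 : k ≤ i + 3) :
    nuQ T i k = nvQ T i (T.pos k) := if_pos ⟨h1, h2⟩

theorem nuQ_in_bounds (h : Ctx T i) {k : ℕ} (h1 : i ≤ k) (h2 : k ≤ i + 3) :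
    i ≤ nuQ T i k ∧ nuQ T i k ≤ i + 3 := by
  rw [nuQ_in h1 h2]
  exact ⟨nvQ_ge h (pos_mem_Sq_of h1 h2), nvQ_le h (pos_mem_Sq_of h1 h2)⟩

theorem nuQ_zero (h : Ctx T i) : nuQ T i 0 = 0 :=
  nuQ_out (by have := h.h1; omega)

theorem bijOn_nuQ (h : Ctx T i)
    (hr12 : (T.pos (i+1)).1 < (T.pos (i+2)).1) (hr23 : (T.pos (i+2)).1 < (T.pos (i+3)).1) :
    Set.BijOn (nuQ T i) (Set.Icc 1 Y.card) (Set.Icc 1 Y.card) := by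
  have hh1 := h.h1
  have hh2 := h.h2
  refine ⟨?_, ?_, ?_⟩
  · intro k hk
    by_cases hw : i ≤ k ∧ k ≤ i + 3
    · have := nuQ_in_bounds h hw.1 hw.2
      exact ⟨by omega, by omega⟩
    · rw [nuQ_out hw]; exact hk
  · intro a ha b hb he
    by_cases hwa : i ≤ a ∧ a ≤ i + 3 <;> by_cases hwb : i ≤ b ∧ b ≤ i + 3
    · rw [nuQ_in hwa.1 hwa.2, nuQ_in hwb.1 hwb.2] at he
      have := nvQ_injOn h hr12 hr23 (pos_mem_Sq_of hwa.1 hwa.2) (pos_mem_Sq_of hwb.1 hwb.2) he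
      have ha' := T.entry_pos (k := a) ⟨ha.1, ha.2⟩
      have hb' := T.entry_pos (k := b) ⟨hb.1, hb.2⟩
      rw [← ha', ← hb', this]
    · exfalso
      have := nuQ_in_bounds h hwa.1 hwa.2
      rw [nuQ_out hwb] at he; omega
    · exfalso
      have := nuQ_in_bounds h hwb.1 hwb.2
      rw [nuQ_out hwa] at he; omega
    · rw [nuQ_out hwa, nuQ_out hwb] at he; exact he
  · intro m hm
    by_cases hw : i ≤ m ∧ m ≤ i + 3
    · obtain ⟨c, hcS, hcv⟩ := nvQ_surj h hr12 hr23 m hw.1 hw.2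
      obtain ⟨t, ht, rfl⟩ := Ctx.mem_Sq.1 hcS
      refine ⟨i + t, ⟨by omega, by omega⟩, ?_⟩
      rw [nuQ_in (by omega) (by omega)]
      exact hcv
    · exact ⟨m, hm, nuQ_out hw⟩

end nuQ


section keyQ

variable {T : SYT Y} {i : ℕ}

theorem selQ_cases1 (h : Ctx T i) (hsel : selQ T i = T.pos (i+1)) :
    (T.pos i).1 = (T.pos (i+1)).1 ∨
      ((T.pos i).2 = (T.pos (i+1)).2 ∧ ¬(T.pos i).2 = (T.pos (i+2)).2) := by
  have d01 := h.pos_ne' (t := 0) (t' := 1) (by omega) (by omega) (by omega)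
  have d12 := h.pos_ne' (t := 1) (t' := 2) (by omega) (by omega) (by omega)
  have d13 := h.pos_ne' (t := 1) (t' := 3) (by omega) (by omega) (by omega)
  simp only [Nat.add_zero] at d01
  rw [selQ] at hsel
  split_ifs at hsel with h1 h2 h3 h4 h5 h6
  · exact Or.inl h1
  · exact absurd hsel d12.symm
  · exact absurd hsel d13.symm
  · exact absurd hsel d13.symm
  · exact absurd hsel d12.symm
  · exact Or.inr ⟨h6, h5⟩
  · exact absurd hsel d01

theorem selQ_cases2 (h : Ctx T i) (hsel : selQ T i = T.pos (i+2)) :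
    (T.pos i).1 = (T.pos (i+2)).1 ∨
      ((T.pos i).2 = (T.pos (i+2)).2 ∧ ¬(T.pos i).2 = (T.pos (i+3)).2) := by
  have d02 := h.pos_ne' (t := 0) (t' := 2) (by omega) (by omega) (by omega)
  have d12 := h.pos_ne' (t := 1) (t' := 2) (by omega) (by omega) (by omega)
  have d23 := h.pos_ne' (t := 2) (t' := 3) (by omega) (by omega) (by omega)
  simp only [Nat.add_zero] at d02
  rw [selQ] at hsel
  split_ifs at hsel with h1 h2 h3 h4 h5 h6
  · exact absurd hsel d12
  · exact Or.inl h2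
  · exact absurd hsel d23.symm
  · exact absurd hsel d23.symm
  · exact Or.inr ⟨h5, h4⟩
  · exact absurd hsel d12
  · exact absurd hsel d02

theorem contraQ (h : Ctx T i)
    (hr12 : (T.pos (i+1)).1 < (T.pos (i+2)).1) (hr23 : (T.pos (i+2)).1 < (T.pos (i+3)).1)
    {a : ℕ} (ha1 : 1 ≤ a) (ha : a ≤ 2)
    (hradj : (T.pos (i+(a+1))).1 = (T.pos (i+a)).1 + 1)
    (hcadj : (T.pos (i+(a+1))).2 = (T.pos (i+a)).2)
    (hsel : selQ T i = T.pos (i+a)) : False := by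
  have e0 := h.entry_posm (t := 0) (by omega)
  have e1 := h.entry_posm (t := 1) (by omega)
  have e2 := h.entry_posm (t := 2) (by omega)
  have e3 := h.entry_posm (t := 3) (by omega)
  simp only [Nat.add_zero] at e0
  interval_cases a
  · simp only [Nat.reduceAdd] at hradj hcadj hsel
    rcases selQ_cases1 h hsel with hr | ⟨hc1, hc2⟩
    · have hd : (T.pos i).2 < (T.pos (i+1)).2 := by
        apply T.col_lt_of_row_eq (show T.pos i ∈ Y by simpa using h.posm (t := 0) (by omega)) (h.posm (t := 1) (by omega)) hr
        rw [e0, e1]; omega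
      have hwY : ((T.pos (i+2)).1, (T.pos i).2) ∈ Y := by
        apply Y.up_left_mem le_rfl (show (T.pos i).2 ≤ (T.pos (i+2)).2 by omega)
        simpa using h.posm (t := 2) (by omega)
      have h_lo : T.entry (T.pos i).1 (T.pos i).2 < T.entry (T.pos (i+2)).1 (T.pos i).2 :=
        T.col_strict (by omega) hwY
      have h_hi : T.entry (T.pos (i+2)).1 (T.pos i).2
          < T.entry (T.pos (i+2)).1 (T.pos (i+2)).2 :=
        T.row_strict (by omega) (by simpa using h.posm (t := 2) (by omega))
      rw [e0] at h_lo
      rw [e2] at h_hi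
      have hp := T.pos_eq_of hwY (rfl :
        T.entry (T.pos (i+2)).1 (T.pos i).2 = T.entry (T.pos (i+2)).1 (T.pos i).2)
      have he : T.entry (T.pos (i+2)).1 (T.pos i).2 = i + 1 := by omega
      rw [he] at hp
      have := congrArg Prod.fst hp
      simp only at this
      omega
    · omega
  · simp only [Nat.reduceAdd] at hradj hcadj hsel
    rcases selQ_cases2 h hsel with hr | ⟨hc1, hc2⟩
    · have hd : (T.pos i).2 < (T.pos (i+2)).2 := by
        apply T.col_lt_of_row_eq (show T.pos i ∈ Y by simpa using h.posm (t := 0) (by omega)) (h.posm (t := 2) (by omega)) hr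
        rw [e0, e2]; omega
      have hwY : ((T.pos (i+3)).1, (T.pos i).2) ∈ Y := by
        apply Y.up_left_mem le_rfl (show (T.pos i).2 ≤ (T.pos (i+3)).2 by omega)
        simpa using h.posm (t := 3) (by omega)
      have h_lo : T.entry (T.pos i).1 (T.pos i).2 < T.entry (T.pos (i+3)).1 (T.pos i).2 :=
        T.col_strict (by omega) hwY
      have h_hi : T.entry (T.pos (i+3)).1 (T.pos i).2
          < T.entry (T.pos (i+3)).1 (T.pos (i+3)).2 :=
        T.row_strict (by omega) (by simpa using h.posm (t := 3) (by omega))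
      rw [e0] at h_lo
      rw [e3] at h_hi
      have hp := T.pos_eq_of hwY (rfl :
        T.entry (T.pos (i+3)).1 (T.pos i).2 = T.entry (T.pos (i+3)).1 (T.pos i).2)
      have hcases : T.entry (T.pos (i+3)).1 (T.pos i).2 = i + 1 ∨
          T.entry (T.pos (i+3)).1 (T.pos i).2 = i + 2 := by omega
      rcases hcases with he | he
      · rw [he] at hp
        have := congrArg Prod.fst hp
        simp only at this
        omega
      · rw [he] at hp
        have := congrArg Prod.fst hp
        simp only at this
        omega
    · omega

theorem keyQ (h : Ctx T i)
    (hr12 : (T.pos (i+1)).1 < (T.pos (i+2)).1) (hr23 : (T.pos (i+2)).1 < (T.pos (i+3)).1)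
    {u v : ℕ} (hu : i ≤ u) (hv : v ≤ i + 3) (huv : u < v)
    (hadj : ((T.pos v).1 = (T.pos u).1 ∧ (T.pos v).2 = (T.pos u).2 + 1) ∨
            ((T.pos v).1 = (T.pos u).1 + 1 ∧ (T.pos v).2 = (T.pos u).2)) :
    nvQ T i (T.pos u) < nvQ T i (T.pos v) := by
  obtain ⟨a, rfl⟩ : ∃ a, u = i + a := ⟨u - i, by omega⟩
  obtain ⟨b, rfl⟩ : ∃ b, v = i + b := ⟨v - i + a - a, by omega⟩
  have hab : a < b := by omega
  have hb3 : b ≤ 3 := by omega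
  have huS : T.pos (i+a) ∈ Sq T i := Ctx.pos_mem_Sq (by omega)
  have hvS : T.pos (i+b) ∈ Sq T i := Ctx.pos_mem_Sq (by omega)
  have hne_uv : T.pos (i+a) ≠ T.pos (i+b) := h.pos_ne' (by omega) (by omega) (by omega)
  rcases hadj with ⟨h1, h2⟩ | ⟨h1, h2⟩
  · -- horizontal adjacency : same row.  Forces a = 0 and selector = row branch.
    have ha0 : a = 0 := by
      by_contra ha0
      have := rowsqQ hr12 hr23 a b (by omega) hab hb3
      omega
    subst ha0
    have hsel : selQ T i = T.pos (i+b) := by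
      have hb1 : 1 ≤ b := by omega
      interval_cases b
      · exact selQ_row1 (by simpa using h1.symm)
      · exact selQ_row2 hr12 (by simpa using h1.symm)
      · exact selQ_row3 hr12 hr23 (by simpa using h1.symm)
    rw [← hsel, nvQ_sel]
    have hune : T.pos (i+0) ≠ selQ T i := by rw [hsel]; exact hne_uv
    have := (nvQ_bounds h huS hune).2
    omega
  · -- vertical adjacency
    by_cases hsd : selQ T i = T.pos (i+b)
    · rw [← hsd, nvQ_sel]
      have hune : T.pos (i+a) ≠ selQ T i := by rw [hsd]; exact hne_uv
      have := (nvQ_bounds h huS hune).2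
      omega
    · by_cases ha0 : a = 0
      · subst ha0
        have hne_bot : selQ T i ≠ T.pos i :=
          selQ_ne_bot h (t := b) (by omega) hb3 (by simpa using h2.symm)
        have hne_bot' : T.pos (i+0) ≠ selQ T i := by
          simp only [Nat.add_zero]; exact fun he => hne_bot he.symm
        have hcE : T.pos (i+0) ∈ EQ T i := mem_EQ.2 ⟨huS, hne_bot'⟩
        have hdE : T.pos (i+b) ∈ EQ T i := mem_EQ.2 ⟨hvS, fun he => hsd he.symm⟩
        exact nvQ_mono h hcE hdE (by omega)
      · have hb1 : b = a + 1 := by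
          by_contra hb1
          have hA := rowsqQ hr12 hr23 a (a+1) (by omega) (by omega) (by omega)
          have hB := rowsqQ hr12 hr23 (a+1) b (by omega) (by omega) (by omega)
          omega
        subst hb1
        by_cases hsc : selQ T i = T.pos (i+a)
        · exact absurd hsc (fun hsc' =>
            contraQ h hr12 hr23 (by omega) (by omega) h1 h2 hsc')
        · have hcE : T.pos (i+a) ∈ EQ T i := mem_EQ.2 ⟨huS, fun he => hsc he.symm⟩
          have hdE : T.pos (i+(a+1)) ∈ EQ T i := mem_EQ.2 ⟨hvS, fun he => hsd he.symm⟩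
          exact nvQ_mono h hcE hdE (by omega)

end keyQ

section psi

variable {T : SYT Y} {i : ℕ}

theorem hstepQ_row (h : Ctx T i)
    (hr12 : (T.pos (i+1)).1 < (T.pos (i+2)).1) (hr23 : (T.pos (i+2)).1 < (T.pos (i+3)).1) :
    ∀ a b : ℕ, (a, b + 1) ∈ Y →
      nuQ T i (T.entry a b) < nuQ T i (T.entry a (b + 1)) := by
  intro a b hm1
  have hm0 : (a, b) ∈ Y := Y.up_left_mem le_rfl (by omega) hm1
  have huv : T.entry a b < T.entry a (b+1) := T.row_strict (by omega) hm1
  have hu := T.entry_mem hm0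
  have hv := T.entry_mem hm1
  by_cases hwu : i ≤ T.entry a b ∧ T.entry a b ≤ i + 3 <;>
    by_cases hwv : i ≤ T.entry a (b+1) ∧ T.entry a (b+1) ≤ i + 3
  · rw [nuQ_in hwu.1 hwu.2, nuQ_in hwv.1 hwv.2]
    apply keyQ h hr12 hr23 hwu.1 hwv.2 huv
    left
    rw [T.pos_eq_of hm0 rfl, T.pos_eq_of hm1 rfl]
    exact ⟨rfl, rfl⟩
  · have h1 := nuQ_in_bounds h hwu.1 hwu.2
    rw [nuQ_out hwv]
    omega
  · have h1 := nuQ_in_bounds h hwv.1 hwv.2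
    rw [nuQ_out hwu]
    omega
  · rw [nuQ_out hwu, nuQ_out hwv]; exact huv

theorem hstepQ_col (h : Ctx T i)
    (hr12 : (T.pos (i+1)).1 < (T.pos (i+2)).1) (hr23 : (T.pos (i+2)).1 < (T.pos (i+3)).1) :
    ∀ a b : ℕ, (a + 1, b) ∈ Y →
      nuQ T i (T.entry a b) < nuQ T i (T.entry (a + 1) b) := by
  intro a b hm1
  have hm0 : (a, b) ∈ Y := Y.up_left_mem (by omega) le_rfl hm1
  have huv : T.entry a b < T.entry (a+1) b := T.col_strict (by omega) hm1
  have hu := T.entry_mem hm0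
  have hv := T.entry_mem hm1
  by_cases hwu : i ≤ T.entry a b ∧ T.entry a b ≤ i + 3 <;>
    by_cases hwv : i ≤ T.entry (a+1) b ∧ T.entry (a+1) b ≤ i + 3
  · rw [nuQ_in hwu.1 hwu.2, nuQ_in hwv.1 hwv.2]
    apply keyQ h hr12 hr23 hwu.1 hwv.2 huv
    right
    rw [T.pos_eq_of hm0 rfl, T.pos_eq_of hm1 rfl]
    exact ⟨rfl, rfl⟩
  · have h1 := nuQ_in_bounds h hwu.1 hwu.2
    rw [nuQ_out hwv]
    omega
  · have h1 := nuQ_in_bounds h hwv.1 hwv.2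
    rw [nuQ_out hwu]
    omega
  · rw [nuQ_out hwu, nuQ_out hwv]; exact huv

end psi

/-- The backward map : relabel the window values according to `nuQ`. -/
noncomputable def psi (T : SYT Y) (i : ℕ) (h : Ctx T i)
    (hr12 : (T.pos (i+1)).1 < (T.pos (i+2)).1) (hr23 : (T.pos (i+2)).1 < (T.pos (i+3)).1) :
    SYT Y where
  entry a b := nuQ T i (T.entry a b)
  bijOn := (bijOn_nuQ h hr12 hr23).comp T.bijOn
  row_strict := fun _ _ _ hj hm =>
    relabel_row_strict T (nuQ T i) (hstepQ_row h hr12 hr23) hj hm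
  col_strict := fun _ _ _ hj hm =>
    relabel_col_strict T (nuQ T i) (hstepQ_col h hr12 hr23) hj hm
  zeros := fun a b hm => by
    show nuQ T i (T.entry a b) = 0
    rw [T.zeros hm]
    exact nuQ_zero h

section psiProps

variable {T : SYT Y} {i : ℕ} (h : Ctx T i)
  (hr12 : (T.pos (i+1)).1 < (T.pos (i+2)).1) (hr23 : (T.pos (i+2)).1 < (T.pos (i+3)).1)

theorem psi_entry (a b : ℕ) :
    (psi T i h hr12 hr23).entry a b = nuQ T i (T.entry a b) := rfl

include h in
theorem psi_entry_cell {c : ℕ × ℕ} (hc : c ∈ Sq T i) :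
    (psi T i h hr12 hr23).entry c.1 c.2 = nvQ T i c := by
  obtain ⟨t, ht, rfl⟩ := Ctx.mem_Sq.1 hc
  rw [psi_entry, h.entry_posm ht, nuQ_in (by omega) (by omega)]

include h hr12 hr23 in
theorem psi_descents :
    (psi T i h hr12 hr23).IsDescent i ∧ (psi T i h hr12 hr23).IsDescent (i+1) := by
  obtain ⟨c0, hc0S, hc0⟩ := nvQ_surj h hr12 hr23 i (by omega) (by omega)
  obtain ⟨c1, hc1S, hc1⟩ := nvQ_surj h hr12 hr23 (i+1) (by omega) (by omega)
  obtain ⟨c2, hc2S, hc2⟩ := nvQ_surj h hr12 hr23 (i+2) (by omega) (by omega)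
  have hne0 : c0 ≠ selQ T i := fun he => by rw [he, nvQ_sel] at hc0; omega
  have hne1 : c1 ≠ selQ T i := fun he => by rw [he, nvQ_sel] at hc1; omega
  have hne2 : c2 ≠ selQ T i := fun he => by rw [he, nvQ_sel] at hc2; omega
  have h01 : c0.1 < c1.1 := by
    apply (nvQ_lt_iff h hr12 hr23 (mem_EQ.2 ⟨hc0S, hne0⟩) (mem_EQ.2 ⟨hc1S, hne1⟩)
      (fun he => by rw [he, hc1] at hc0; omega)).2
    omega
  have h12 : c1.1 < c2.1 := by
    apply (nvQ_lt_iff h hr12 hr23 (mem_EQ.2 ⟨hc1S, hne1⟩) (mem_EQ.2 ⟨hc2S, hne2⟩)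
      (fun he => by rw [he, hc2] at hc1; omega)).2
    omega
  constructor
  · exact ⟨c0, by simpa [YoungDiagram.mem_cells] using h.Sq_subset hc0S, c1,
      by simpa [YoungDiagram.mem_cells] using h.Sq_subset hc1S,
      by rw [psi_entry_cell h hr12 hr23 hc0S]; exact hc0,
      by rw [psi_entry_cell h hr12 hr23 hc1S]; rw [hc1], h01⟩
  · exact ⟨c1, by simpa [YoungDiagram.mem_cells] using h.Sq_subset hc1S, c2,
      by simpa [YoungDiagram.mem_cells] using h.Sq_subset hc2S,
      by rw [psi_entry_cell h hr12 hr23 hc1S]; exact hc1,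
      by rw [psi_entry_cell h hr12 hr23 hc2S]; rw [hc2], h12⟩

end psiProps


/-! ### Round trip : ψ (φ T) = T -/

section RT1

variable {T : SYT Y} {i : ℕ} (h : Ctx T i)
  (hr01 : (T.pos i).1 < (T.pos (i+1)).1) (hr12 : (T.pos (i+1)).1 < (T.pos (i+2)).1)

include h hr01 hr12

theorem phi_pos {c : ℕ × ℕ} (hc : c ∈ Sq T i) :
    (phi T i h hr01 hr12).pos (nvP T i c) = c :=
  (phi T i h hr01 hr12).pos_eq_of (h.Sq_subset hc) (phi_entry_cell h hr01 hr12 hc)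

theorem phi_pos_bot : (phi T i h hr01 hr12).pos i = selP T i := by
  have := phi_pos h hr01 hr12 (selP_mem (T := T) (i := i))
  rwa [nvP_sel] at this

theorem phi_ctx : Ctx (phi T i h hr01 hr12) i := ⟨h.h1, h.h2⟩

theorem phi_hr12 :
    ((phi T i h hr01 hr12).pos (i+1)).1 < ((phi T i h hr01 hr12).pos (i+2)).1 :=
  ((phi T i h hr01 hr12).isDescent_iff (by omega) (by have := h.h2; omega)).1
    (phi_descents h hr01 hr12).1

theorem phi_hr23 :
    ((phi T i h hr01 hr12).pos (i+2)).1 < ((phi T i h hr01 hr12).pos (i+3)).1 :=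
  ((phi T i h hr01 hr12).isDescent_iff (by omega) (by have := h.h2; omega)).1
    (phi_descents h hr01 hr12).2

theorem phi_pos_window {s : ℕ} (hs1 : 1 ≤ s) (hs3 : s ≤ 3) :
    (phi T i h hr01 hr12).pos (i + s) ∈ EP T i := by
  obtain ⟨c, hcS, hcv⟩ := nvP_surj h hr01 hr12 (i+s) (by omega) (by omega)
  have hc' : (phi T i h hr01 hr12).pos (i + s) = c := by
    rw [← hcv]; exact phi_pos h hr01 hr12 hcS
  rw [hc']
  exact mem_EP.2 ⟨hcS, fun he => by rw [he, nvP_sel] at hcv; omega⟩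

theorem Sq_phi : Sq (phi T i h hr01 hr12) i = Sq T i := by
  apply Finset.eq_of_subset_of_card_le
  · intro c hc
    obtain ⟨t, ht, rfl⟩ := Ctx.mem_Sq.1 hc
    by_cases ht0 : t = 0
    · subst ht0
      simpa using (phi_pos_bot h hr01 hr12) ▸ (selP_mem (T := T) (i := i))
    · exact mem_EP.1 (phi_pos_window h hr01 hr12 (by omega) ht) |>.1
  · rw [h.card_Sq, (phi_ctx h hr01 hr12).card_Sq]

/-- selector rows never collide with other window rows when there is no row match. -/
theorem rowNe_selP (hA : ∀ t ≤ 2, (T.pos (i+3)).1 ≠ (T.pos (i+t)).1)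
    {c : ℕ × ℕ} (hc : c ∈ EP T i) : (selP T i).1 ≠ c.1 := by
  obtain ⟨hcS, hcne⟩ := mem_EP.1 hc
  obtain ⟨t0, ht0, he0⟩ := Ctx.mem_Sq.1 (selP_mem (T := T) (i := i))
  obtain ⟨t, ht, rfl⟩ := Ctx.mem_Sq.1 hcS
  have htt : t0 ≠ t := by
    rintro rfl
    exact hcne he0.symm
  rw [he0]
  by_cases h3 : t0 = 3
  · subst h3
    have ht2 : t ≤ 2 := by omega
    exact hA t ht2
  · by_cases h3' : t = 3
    · subst h3'
      exact fun hrr => hA t0 (by omega) hrr.symm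
    · rcases Nat.lt_or_ge t0 t with H | H
      · have := rowsq hr01 hr12 t0 t H (by omega); omega
      · have := rowsq hr01 hr12 t t0 (by omega) (by omega); omega

/-- In the relabeled tableau, the backward selector recovers the cell of `i+3`. -/
theorem selQ_phi : selQ (phi T i h hr01 hr12) i = T.pos (i+3) := by
  set U := phi T i h hr01 hr12 with hU
  have hctxU : Ctx U i := phi_ctx h hr01 hr12
  have hUr12 := phi_hr12 h hr01 hr12
  have hUr23 := phi_hr23 h hr01 hr12
  have hUbot : U.pos i = selP T i := phi_pos_bot h hr01 hr12
  have hrS : T.pos (i+3) ∈ Sq T i := Ctx.pos_mem_Sq (by omega)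
  have e3 := h.entry_posm (t := 3) (by omega)
  -- the index of the cell of i+3 inside U
  by_cases hAex : ∃ t ≤ 2, (T.pos (i+3)).1 = (T.pos (i+t)).1
  · -- row-match case
    obtain ⟨t, ht, hrt⟩ := hAex
    have hsel : selP T i = T.pos (i+t) := by
      interval_cases t
      · simpa using selP_row0 (by simpa using hrt)
      · exact selP_row1 hr01 hrt
      · exact selP_row2 hr01 hr12 hrt
    have hrne : T.pos (i+3) ≠ selP T i := by
      rw [hsel]; exact h.pos_ne' (by omega) (by omega) (by omega)
    have hmb := nvP_bounds h hrS hrne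
    have hUm : U.pos (nvP T i (T.pos (i+3))) = T.pos (i+3) := phi_pos h hr01 hr12 hrS
    have hrow : (U.pos i).1 = (T.pos (i+3)).1 := by
      rw [hUbot, hsel]; exact hrt.symm
    have hcases : nvP T i (T.pos (i+3)) = i + 1 ∨ nvP T i (T.pos (i+3)) = i + 2 ∨
        nvP T i (T.pos (i+3)) = i + 3 := by omega
    rcases hcases with hm | hm | hm
    · rw [hm] at hUm
      rw [selQ_row1 (T := U) (by rw [hUm]; exact hrow), hUm]
    · rw [hm] at hUm
      rw [selQ_row2 (T := U) hUr12 (by rw [hUm]; exact hrow), hUm]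
    · rw [hm] at hUm
      rw [selQ_row3 (T := U) hUr12 hUr23 (by rw [hUm]; exact hrow), hUm]
  · push_neg at hAex
    -- no row match ; every E-cell has row different from the selector's row
    have hnorowU : ∀ s, 1 ≤ s → s ≤ 3 → ¬(U.pos i).1 = (U.pos (i+s)).1 := by
      intro s hs1 hs3 hcon
      have hcE := phi_pos_window h hr01 hr12 hs1 hs3
      exact rowNe_selP h hr01 hr12 hAex hcE (by rw [← hUbot]; exact hcon)
    by_cases hBex : (T.pos (i+3)).2 = (T.pos i).2 ∨ (T.pos (i+3)).2 = (T.pos (i+1)).2 ∨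
        (T.pos (i+3)).2 = (T.pos (i+2)).2
    · -- column-match case
      have hsel : ∃ t0 ≤ 2, selP T i = T.pos (i+t0) ∧ (T.pos (i+3)).2 = (T.pos (i+t0)).2 := by
        by_cases hc0 : (T.pos (i+3)).2 = (T.pos i).2
        · refine ⟨0, by omega, ?_, ?_⟩
          · exact selP_col0 (hAex 0 (by omega)) (hAex 1 (by omega)) (hAex 2 (by omega)) hc0
          · exact hc0
        · by_cases hc1 : (T.pos (i+3)).2 = (T.pos (i+1)).2
          · refine ⟨1, by omega, ?_, hc1⟩
            exact selP_col1 (hAex 0 (by omega)) (hAex 1 (by omega)) (hAex 2 (by omega)) hc0 hc1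
          · have hc2 : (T.pos (i+3)).2 = (T.pos (i+2)).2 := by tauto
            refine ⟨2, by omega, ?_, hc2⟩
            exact selP_col2 (hAex 0 (by omega)) (hAex 1 (by omega)) (hAex 2 (by omega)) hc0 hc1 hc2
      obtain ⟨t0, ht0, hsel, hcol⟩ := hsel
      have hrne : T.pos (i+3) ≠ selP T i := by
        rw [hsel]; exact h.pos_ne' (by omega) (by omega) (by omega)
      have hmb := nvP_bounds h hrS hrne
      have hUm : U.pos (nvP T i (T.pos (i+3))) = T.pos (i+3) := phi_pos h hr01 hr12 hrS
      have hcolU : (U.pos i).2 = (T.pos (i+3)).2 := by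
        rw [hUbot, hsel]; exact hcol.symm
      -- cells with larger relabeled value sit in strictly lower rows than the cell of i+3,
      -- hence cannot share its column
      have hhigher : ∀ s, 1 ≤ s → s ≤ 3 → i + s > nvP T i (T.pos (i+3)) →
          ¬(U.pos i).2 = (U.pos (i+s)).2 := by
        intro s hs1 hs3 hgt hcon
        have hcE := phi_pos_window h hr01 hr12 hs1 hs3
        obtain ⟨hcS, hcne⟩ := mem_EP.1 hcE
        have hrE : T.pos (i+3) ∈ EP T i := mem_EP.2 ⟨hrS, hrne⟩
        have hvc : nvP T i (U.pos (i+s)) = i + s := by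
          obtain ⟨c, hcS', hcv⟩ := nvP_surj h hr01 hr12 (i+s) (by omega) (by omega)
          rw [show U.pos (i+s) = c by rw [← hcv]; exact phi_pos h hr01 hr12 hcS']
          exact hcv
        have hne_cr : U.pos (i+s) ≠ T.pos (i+3) := by
          intro he
          rw [he] at hvc
          omega
        -- row comparison from value comparison
        have hrowlt : (T.pos (i+3)).1 < (U.pos (i+s)).1 := by
          apply (nvP_lt_iff h hr01 hr12 hrE hcE (Ne.symm hne_cr)).2
          rw [hvc]; omega
        -- same column ⇒ the larger entry is lower : entry of U.pos (i+s) under T is ≤ i+2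
        have hcol' : (U.pos (i+s)).2 = (T.pos (i+3)).2 := by
          rw [← hcon, hcolU]
        -- T-entry of that cell
        obtain ⟨tc, htc, hrep⟩ := Ctx.mem_Sq.1 hcS
        have htc3 : tc ≠ 3 := by
          intro he
          rw [he] at hrep
          exact hne_cr hrep
        have := T.row_lt_of_col_eq (h.Sq_subset hcS) (h.posm (t := 3) (by omega)) hcol'
          (by rw [hrep, h.entry_posm htc, e3]; omega)
        rw [hU] at hrowlt
        omega
      have hcases : nvP T i (T.pos (i+3)) = i + 1 ∨ nvP T i (T.pos (i+3)) = i + 2 ∨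
          nvP T i (T.pos (i+3)) = i + 3 := by omega
      rcases hcases with hm | hm | hm
      · rw [hm] at hUm
        rw [selQ_col1 (T := U) (hnorowU 1 (by omega) (by omega)) (hnorowU 2 (by omega) (by omega))
          (hnorowU 3 (by omega) (by omega)) (hhigher 3 (by omega) (by omega) (by omega))
          (hhigher 2 (by omega) (by omega) (by omega)) (by rw [hUm]; exact hcolU), hUm]
      · rw [hm] at hUm
        rw [selQ_col2 (T := U) (hnorowU 1 (by omega) (by omega)) (hnorowU 2 (by omega) (by omega))
          (hnorowU 3 (by omega) (by omega)) (hhigher 3 (by omega) (by omega) (by omega))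
          (by rw [hUm]; exact hcolU), hUm]
      · rw [hm] at hUm
        rw [selQ_col3 (T := U) (hnorowU 1 (by omega) (by omega)) (hnorowU 2 (by omega) (by omega))
          (hnorowU 3 (by omega) (by omega)) (by rw [hUm]; exact hcolU), hUm]
    · -- self case : no match at all, the selector was the cell of i+3 itself
      push_neg at hBex
      obtain ⟨hc0, hc1, hc2⟩ := hBex
      have hsel : selP T i = T.pos (i+3) :=
        selP_self (hAex 0 (by omega)) (hAex 1 (by omega)) (hAex 2 (by omega))
          (by simpa using hc0) hc1 hc2
      -- no column match in U either
      have hnocolU : ∀ s, 1 ≤ s → s ≤ 3 → ¬(U.pos i).2 = (U.pos (i+s)).2 := by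
        intro s hs1 hs3 hcon
        have hcE := phi_pos_window h hr01 hr12 hs1 hs3
        obtain ⟨hcS, hcne⟩ := mem_EP.1 hcE
        obtain ⟨tc, htc, hrep⟩ := Ctx.mem_Sq.1 hcS
        have htc3 : tc ≠ 3 := by
          rintro rfl
          rw [← hsel] at hrep
          exact hcne hrep
        have : (T.pos (i+3)).2 = (T.pos (i+tc)).2 := by
          rw [← hrep, ← hcon, hUbot, hsel]
        interval_cases tc
        · exact (by simpa using hc0 : ¬(T.pos (i+3)).2 = (T.pos (i+0)).2) this
        · exact hc1 this
        · exact hc2 this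
        · omega
      rw [selQ_self (hnorowU 1 (by omega) (by omega)) (hnorowU 2 (by omega) (by omega))
        (hnorowU 3 (by omega) (by omega)) (hnocolU 3 (by omega) (by omega))
        (hnocolU 2 (by omega) (by omega)) (hnocolU 1 (by omega) (by omega)), hUbot, hsel]

end RT1


section RT1b

variable {T : SYT Y} {i : ℕ} (h : Ctx T i)
  (hr01 : (T.pos i).1 < (T.pos (i+1)).1) (hr12 : (T.pos (i+1)).1 < (T.pos (i+2)).1)

include h hr01 hr12

theorem nvQ_phi : ∀ c ∈ Sq T i, nvQ (phi T i h hr01 hr12) i c = T.entry c.1 c.2 := by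
  have hctxU := phi_ctx h hr01 hr12
  have hRT1 := selQ_phi h hr01 hr12
  have hSq := Sq_phi h hr01 hr12
  have hmemE : ∀ s ≤ 2, T.pos (i+s) ∈ EQ (phi T i h hr01 hr12) i := by
    intro s hs
    apply mem_EQ.2
    constructor
    · rw [hSq]; exact Ctx.pos_mem_Sq (by omega)
    · rw [hRT1]; exact h.pos_ne' (by omega) (by omega) (by omega)
  have b0 := nvQ_bounds hctxU (mem_EQ.1 (hmemE 0 (by omega))).1 (mem_EQ.1 (hmemE 0 (by omega))).2
  have b1 := nvQ_bounds hctxU (mem_EQ.1 (hmemE 1 (by omega))).1 (mem_EQ.1 (hmemE 1 (by omega))).2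
  have b2 := nvQ_bounds hctxU (mem_EQ.1 (hmemE 2 (by omega))).1 (mem_EQ.1 (hmemE 2 (by omega))).2
  have l01 := nvQ_mono hctxU (hmemE 0 (by omega)) (hmemE 1 (by omega))
    (show (T.pos (i+0)).1 < (T.pos (i+1)).1 by simpa using hr01)
  have l12 := nvQ_mono hctxU (hmemE 1 (by omega)) (hmemE 2 (by omega)) hr12
  intro c hc
  obtain ⟨t, ht, rfl⟩ := Ctx.mem_Sq.1 hc
  rw [h.entry_posm ht]
  by_cases ht3 : t = 3
  · subst ht3
    rw [← hRT1, nvQ_sel]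
  · interval_cases t
    · omega
    · omega
    · omega
    · omega

theorem psi_phi :
    psi (phi T i h hr01 hr12) i (phi_ctx h hr01 hr12) (phi_hr12 h hr01 hr12)
      (phi_hr23 h hr01 hr12) = T := by
  apply ext'
  funext a b
  rw [psi_entry, phi_entry]
  by_cases hmem : (a, b) ∈ Y
  · have hk : T.entry a b ∈ Set.Icc 1 Y.card := T.entry_mem hmem
    by_cases hw : i ≤ T.entry a b ∧ T.entry a b ≤ i + 3
    · rw [nuP_in hw.1 hw.2]
      have hbS : T.pos (T.entry a b) ∈ Sq T i := pos_mem_Sq_of hw.1 hw.2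
      have hb1 : i ≤ nvP T i (T.pos (T.entry a b)) := nvP_ge h hbS
      have hb2 : nvP T i (T.pos (T.entry a b)) ≤ i + 3 := nvP_le h hbS
      rw [nuQ_in hb1 hb2, phi_pos h hr01 hr12 hbS, nvQ_phi h hr01 hr12 _ hbS,
        T.entry_pos hk]
    · rw [nuP_out hw, nuQ_out hw]
  · rw [T.zeros hmem, nuP_zero h]
    exact nuQ_zero (phi_ctx h hr01 hr12)

end RT1b


/-! ### Round trip : φ (ψ T) = T -/

section RT2

variable {T : SYT Y} {i : ℕ} (h : Ctx T i)
  (hr12 : (T.pos (i+1)).1 < (T.pos (i+2)).1) (hr23 : (T.pos (i+2)).1 < (T.pos (i+3)).1)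

include h hr12 hr23

theorem psi_pos {c : ℕ × ℕ} (hc : c ∈ Sq T i) :
    (psi T i h hr12 hr23).pos (nvQ T i c) = c :=
  (psi T i h hr12 hr23).pos_eq_of (h.Sq_subset hc) (psi_entry_cell h hr12 hr23 hc)

theorem psi_pos_top : (psi T i h hr12 hr23).pos (i+3) = selQ T i := by
  have := psi_pos h hr12 hr23 (selQ_mem (T := T) (i := i))
  rwa [nvQ_sel] at this

theorem psi_ctx : Ctx (psi T i h hr12 hr23) i := ⟨h.h1, h.h2⟩

theorem psi_hr01 :
    ((psi T i h hr12 hr23).pos i).1 < ((psi T i h hr12 hr23).pos (i+1)).1 :=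
  ((psi T i h hr12 hr23).isDescent_iff (by have := h.h1; omega) (by have := h.h2; omega)).1
    (psi_descents h hr12 hr23).1

theorem psi_hr12' :
    ((psi T i h hr12 hr23).pos (i+1)).1 < ((psi T i h hr12 hr23).pos (i+2)).1 :=
  ((psi T i h hr12 hr23).isDescent_iff (by omega) (by have := h.h2; omega)).1
    (psi_descents h hr12 hr23).2

theorem psi_pos_window {s : ℕ} (hs : s ≤ 2) :
    (psi T i h hr12 hr23).pos (i + s) ∈ EQ T i := by
  obtain ⟨c, hcS, hcv⟩ := nvQ_surj h hr12 hr23 (i+s) (by omega) (by omega)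
  have hc' : (psi T i h hr12 hr23).pos (i + s) = c := by
    rw [← hcv]; exact psi_pos h hr12 hr23 hcS
  rw [hc']
  exact mem_EQ.2 ⟨hcS, fun he => by rw [he, nvQ_sel] at hcv; omega⟩

theorem Sq_psi : Sq (psi T i h hr12 hr23) i = Sq T i := by
  apply Finset.eq_of_subset_of_card_le
  · intro c hc
    obtain ⟨t, ht, rfl⟩ := Ctx.mem_Sq.1 hc
    by_cases ht3 : t = 3
    · subst ht3
      exact (psi_pos_top h hr12 hr23) ▸ (selQ_mem (T := T) (i := i))
    · exact mem_EQ.1 (psi_pos_window h hr12 hr23 (by omega)) |>.1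
  · rw [h.card_Sq, (psi_ctx h hr12 hr23).card_Sq]

theorem rowNe_selQ (hA : ∀ t, 1 ≤ t → t ≤ 3 → (T.pos i).1 ≠ (T.pos (i+t)).1)
    {c : ℕ × ℕ} (hc : c ∈ EQ T i) : (selQ T i).1 ≠ c.1 := by
  obtain ⟨hcS, hcne⟩ := mem_EQ.1 hc
  obtain ⟨t0, ht0, he0⟩ := Ctx.mem_Sq.1 (selQ_mem (T := T) (i := i))
  obtain ⟨t, ht, rfl⟩ := Ctx.mem_Sq.1 hcS
  have htt : t0 ≠ t := by
    rintro rfl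
    exact hcne he0.symm
  rw [he0]
  by_cases h0 : t0 = 0
  · subst h0
    simp only [Nat.add_zero]
    exact hA t (by omega) (by omega)
  · by_cases h0' : t = 0
    · subst h0'
      simp only [Nat.add_zero]
      exact fun hrr => hA t0 (by omega) (by omega) hrr.symm
    · rcases Nat.lt_or_ge t0 t with H | H
      · have := rowsqQ hr12 hr23 t0 t (by omega) H (by omega); omega
      · have := rowsqQ hr12 hr23 t t0 (by omega) (by omega) (by omega); omega

theorem selP_psi : selP (psi T i h hr12 hr23) i = T.pos i := by
  have hctxV := psi_ctx h hr12 hr23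
  have hVr01 := psi_hr01 h hr12 hr23
  have hVr12 := psi_hr12' h hr12 hr23
  have hVtop : (psi T i h hr12 hr23).pos (i+3) = selQ T i := psi_pos_top h hr12 hr23
  have hsS : T.pos i ∈ Sq T i := by simpa using Ctx.pos_mem_Sq (T := T) (i := i) (t := 0) (by omega)
  have e0 := h.entry_posm (t := 0) (by omega)
  simp only [Nat.add_zero] at e0
  by_cases hAex : ∃ t, 1 ≤ t ∧ t ≤ 3 ∧ (T.pos i).1 = (T.pos (i+t)).1
  · obtain ⟨t, ht1, ht3, hrt⟩ := hAex
    have hsel : selQ T i = T.pos (i+t) := by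
      interval_cases t
      · exact selQ_row1 hrt
      · exact selQ_row2 hr12 hrt
      · exact selQ_row3 hr12 hr23 hrt
    have hsne : T.pos i ≠ selQ T i := by
      rw [hsel]
      exact (by simpa using h.pos_ne' (t := 0) (t' := t) (by omega) (by omega) (by omega))
    have hmb := nvQ_bounds h hsS hsne
    have hVm : (psi T i h hr12 hr23).pos (nvQ T i (T.pos i)) = T.pos i := psi_pos h hr12 hr23 hsS
    have hrow : ((psi T i h hr12 hr23).pos (i+3)).1 = (T.pos i).1 := by
      rw [hVtop, hsel]; exact hrt.symm
    have hcases : nvQ T i (T.pos i) = i ∨ nvQ T i (T.pos i) = i + 1 ∨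
        nvQ T i (T.pos i) = i + 2 := by omega
    rcases hcases with hm | hm | hm
    · rw [hm] at hVm
      rw [selP_row0 (T := psi T i h hr12 hr23) (by rw [hVm]; exact hrow), hVm]
    · rw [hm] at hVm
      rw [selP_row1 (T := psi T i h hr12 hr23) hVr01 (by rw [hVm]; exact hrow), hVm]
    · rw [hm] at hVm
      rw [selP_row2 (T := psi T i h hr12 hr23) hVr01 hVr12 (by rw [hVm]; exact hrow), hVm]
  · push_neg at hAex
    have hAex' : ∀ t, 1 ≤ t → t ≤ 3 → (T.pos i).1 ≠ (T.pos (i+t)).1 := by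
      intro t ht1 ht3
      exact hAex t ht1 ht3
    have hnorowV : ∀ s, s ≤ 2 →
        ¬((psi T i h hr12 hr23).pos (i+3)).1 = ((psi T i h hr12 hr23).pos (i+s)).1 := by
      intro s hs hcon
      have hcE := psi_pos_window h hr12 hr23 hs
      exact rowNe_selQ h hr12 hr23 hAex' hcE (by rw [← hVtop]; exact hcon)
    by_cases hBex : (T.pos i).2 = (T.pos (i+3)).2 ∨ (T.pos i).2 = (T.pos (i+2)).2 ∨
        (T.pos i).2 = (T.pos (i+1)).2
    · have hsel : ∃ t0, 1 ≤ t0 ∧ t0 ≤ 3 ∧ selQ T i = T.pos (i+t0) ∧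
          (T.pos i).2 = (T.pos (i+t0)).2 := by
        by_cases hc3 : (T.pos i).2 = (T.pos (i+3)).2
        · refine ⟨3, by omega, by omega, ?_, hc3⟩
          exact selQ_col3 (hAex' 1 (by omega) (by omega)) (hAex' 2 (by omega) (by omega))
            (hAex' 3 (by omega) (by omega)) hc3
        · by_cases hc2 : (T.pos i).2 = (T.pos (i+2)).2
          · refine ⟨2, by omega, by omega, ?_, hc2⟩
            exact selQ_col2 (hAex' 1 (by omega) (by omega)) (hAex' 2 (by omega) (by omega))
              (hAex' 3 (by omega) (by omega)) hc3 hc2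
          · have hc1 : (T.pos i).2 = (T.pos (i+1)).2 := by tauto
            refine ⟨1, by omega, by omega, ?_, hc1⟩
            exact selQ_col1 (hAex' 1 (by omega) (by omega)) (hAex' 2 (by omega) (by omega))
              (hAex' 3 (by omega) (by omega)) hc3 hc2 hc1
      obtain ⟨t0, ht01, ht03, hsel, hcol⟩ := hsel
      have hsne : T.pos i ≠ selQ T i := by
        rw [hsel]
        exact (by simpa using h.pos_ne' (t := 0) (t' := t0) (by omega) (by omega) (by omega))
      have hmb := nvQ_bounds h hsS hsne
      have hVm : (psi T i h hr12 hr23).pos (nvQ T i (T.pos i)) = T.pos i := psi_pos h hr12 hr23 hsS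
      have hcolV : ((psi T i h hr12 hr23).pos (i+3)).2 = (T.pos i).2 := by
        rw [hVtop, hsel]; exact hcol.symm
      have hlower : ∀ s, s ≤ 2 → i + s < nvQ T i (T.pos i) →
          ¬((psi T i h hr12 hr23).pos (i+3)).2 = ((psi T i h hr12 hr23).pos (i+s)).2 := by
        intro s hs hlt hcon
        have hcE := psi_pos_window h hr12 hr23 hs
        obtain ⟨hcS, hcne⟩ := mem_EQ.1 hcE
        have hsE : T.pos i ∈ EQ T i := mem_EQ.2 ⟨hsS, hsne⟩
        have hvc : nvQ T i ((psi T i h hr12 hr23).pos (i+s)) = i + s := by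
          obtain ⟨c, hcS', hcv⟩ := nvQ_surj h hr12 hr23 (i+s) (by omega) (by omega)
          rw [show (psi T i h hr12 hr23).pos (i+s) = c by
            rw [← hcv]; exact psi_pos h hr12 hr23 hcS']
          exact hcv
        have hne_cs : (psi T i h hr12 hr23).pos (i+s) ≠ T.pos i := by
          intro he
          rw [he] at hvc
          omega
        have hrowlt : ((psi T i h hr12 hr23).pos (i+s)).1 < (T.pos i).1 := by
          apply (nvQ_lt_iff h hr12 hr23 hcE hsE hne_cs).2
          rw [hvc]; omega
        have hcol' : ((psi T i h hr12 hr23).pos (i+s)).2 = (T.pos i).2 := by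
          rw [← hcon, hcolV]
        obtain ⟨tc, htc, hrep⟩ := Ctx.mem_Sq.1 hcS
        have htc0 : tc ≠ 0 := by
          intro he
          rw [he] at hrep
          exact hne_cs (by simpa using hrep)
        have := T.row_lt_of_col_eq (show T.pos i ∈ Y from h.Sq_subset hsS)
          (h.Sq_subset hcS) (hcol'.symm)
          (by rw [hrep, h.entry_posm htc, e0]; omega)
        omega
      have hcases : nvQ T i (T.pos i) = i ∨ nvQ T i (T.pos i) = i + 1 ∨
          nvQ T i (T.pos i) = i + 2 := by omega
      rcases hcases with hm | hm | hm
      · rw [hm] at hVm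
        have hVm' : (psi T i h hr12 hr23).pos i = T.pos i := hVm
        rw [selP_col0 (T := psi T i h hr12 hr23) (hnorowV 0 (by omega)) (hnorowV 1 (by omega))
          (hnorowV 2 (by omega)) (by rw [hVm']; exact hcolV), hVm']
      · rw [hm] at hVm
        rw [selP_col1 (T := psi T i h hr12 hr23) (hnorowV 0 (by omega)) (hnorowV 1 (by omega))
          (hnorowV 2 (by omega)) (hlower 0 (by omega) (by omega))
          (by rw [hVm]; exact hcolV), hVm]
      · rw [hm] at hVm
        rw [selP_col2 (T := psi T i h hr12 hr23) (hnorowV 0 (by omega)) (hnorowV 1 (by omega))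
          (hnorowV 2 (by omega)) (hlower 0 (by omega) (by omega)) (hlower 1 (by omega) (by omega))
          (by rw [hVm]; exact hcolV), hVm]
    · push_neg at hBex
      obtain ⟨hc3, hc2, hc1⟩ := hBex
      have hsel : selQ T i = T.pos i :=
        selQ_self (hAex' 1 (by omega) (by omega)) (hAex' 2 (by omega) (by omega))
          (hAex' 3 (by omega) (by omega)) hc3 hc2 hc1
      have hnocolV : ∀ s, s ≤ 2 →
          ¬((psi T i h hr12 hr23).pos (i+3)).2 = ((psi T i h hr12 hr23).pos (i+s)).2 := by
        intro s hs hcon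
        have hcE := psi_pos_window h hr12 hr23 hs
        obtain ⟨hcS, hcne⟩ := mem_EQ.1 hcE
        obtain ⟨tc, htc, hrep⟩ := Ctx.mem_Sq.1 hcS
        have htc0 : tc ≠ 0 := by
          rintro rfl
          simp only [Nat.add_zero] at hrep
          rw [← hsel] at hrep
          exact hcne hrep
        have : (T.pos i).2 = (T.pos (i+tc)).2 := by
          rw [← hrep, ← hcon, hVtop, hsel]
        interval_cases tc
        · omega
        · exact hc1 this
        · exact hc2 this
        · exact hc3 this
      rw [selP_self (hnorowV 0 (by omega)) (hnorowV 1 (by omega)) (hnorowV 2 (by omega))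
        (hnocolV 0 (by omega)) (hnocolV 1 (by omega)) (hnocolV 2 (by omega)), hVtop, hsel]

theorem nvP_psi : ∀ c ∈ Sq T i, nvP (psi T i h hr12 hr23) i c = T.entry c.1 c.2 := by
  have hctxV := psi_ctx h hr12 hr23
  have hRT := selP_psi h hr12 hr23
  have hSq := Sq_psi h hr12 hr23
  have hmemE : ∀ s, 1 ≤ s → s ≤ 3 → T.pos (i+s) ∈ EP (psi T i h hr12 hr23) i := by
    intro s hs1 hs3
    apply mem_EP.2
    constructor
    · rw [hSq]; exact Ctx.pos_mem_Sq (by omega)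
    · rw [hRT]
      have hps : T.pos i ≠ T.pos (i+s) := by
        have := h.pos_ne' (t := 0) (t' := s) (by omega) (by omega) (by omega)
        simpa using this
      exact fun he => hps he.symm
  have b1 := nvP_bounds hctxV (mem_EP.1 (hmemE 1 (by omega) (by omega))).1
    (mem_EP.1 (hmemE 1 (by omega) (by omega))).2
  have b2 := nvP_bounds hctxV (mem_EP.1 (hmemE 2 (by omega) (by omega))).1
    (mem_EP.1 (hmemE 2 (by omega) (by omega))).2
  have b3 := nvP_bounds hctxV (mem_EP.1 (hmemE 3 (by omega) (by omega))).1
    (mem_EP.1 (hmemE 3 (by omega) (by omega))).2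
  have l12 := nvP_mono hctxV (hmemE 1 (by omega) (by omega)) (hmemE 2 (by omega) (by omega)) hr12
  have l23 := nvP_mono hctxV (hmemE 2 (by omega) (by omega)) (hmemE 3 (by omega) (by omega)) hr23
  intro c hc
  obtain ⟨t, ht, rfl⟩ := Ctx.mem_Sq.1 hc
  rw [h.entry_posm ht]
  by_cases ht0 : t = 0
  · subst ht0
    rw [show (i : ℕ) + 0 = i from rfl, ← hRT, nvP_sel]
  · interval_cases t
    · omega
    · omega
    · omega
    · omega

theorem phi_psi :
    phi (psi T i h hr12 hr23) i (psi_ctx h hr12 hr23) (psi_hr01 h hr12 hr23)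
      (psi_hr12' h hr12 hr23) = T := by
  apply ext'
  funext a b
  rw [phi_entry, psi_entry]
  by_cases hmem : (a, b) ∈ Y
  · have hk : T.entry a b ∈ Set.Icc 1 Y.card := T.entry_mem hmem
    by_cases hw : i ≤ T.entry a b ∧ T.entry a b ≤ i + 3
    · rw [nuQ_in hw.1 hw.2]
      have hbS : T.pos (T.entry a b) ∈ Sq T i := pos_mem_Sq_of hw.1 hw.2
      have hb1 : i ≤ nvQ T i (T.pos (T.entry a b)) := nvQ_ge h hbS
      have hb2 : nvQ T i (T.pos (T.entry a b)) ≤ i + 3 := nvQ_le h hbS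
      rw [nuP_in hb1 hb2, psi_pos h hr12 hr23 hbS, nvP_psi h hr12 hr23 _ hbS,
        T.entry_pos hk]
    · rw [nuQ_out hw, nuP_out hw]
  · rw [T.zeros hmem, nuQ_zero h]
    exact nuP_zero (psi_ctx h hr12 hr23)

end RT2

/-! ### Assembling the equivalence -/

noncomputable def equivStep (Y : YoungDiagram) (i : ℕ) (h1 : 1 ≤ i) (h2 : i + 3 ≤ Y.card) :
    {T : SYT Y // T.IsDescent i ∧ T.IsDescent (i+1)} ≃
      {T : SYT Y // T.IsDescent (i+1) ∧ T.IsDescent (i+2)} where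
  toFun T :=
    ⟨phi T.1 i ⟨h1, h2⟩ ((T.1.isDescent_iff (k := i) h1 (by omega)).1 T.2.1)
        ((T.1.isDescent_iff (k := i+1) (by omega) (by omega)).1 T.2.2),
      phi_descents _ _ _⟩
  invFun S :=
    ⟨psi S.1 i ⟨h1, h2⟩ ((S.1.isDescent_iff (k := i+1) (by omega) (by omega)).1 S.2.1)
        ((S.1.isDescent_iff (k := i+2) (by omega) (by omega)).1 S.2.2),
      psi_descents _ _ _⟩
  left_inv T := Subtype.ext (psi_phi ⟨h1, h2⟩
    ((T.1.isDescent_iff (k := i) h1 (by omega)).1 T.2.1)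
    ((T.1.isDescent_iff (k := i+1) (by omega) (by omega)).1 T.2.2))
  right_inv S := Subtype.ext (phi_psi ⟨h1, h2⟩
    ((S.1.isDescent_iff (k := i+1) (by omega) (by omega)).1 S.2.1)
    ((S.1.isDescent_iff (k := i+2) (by omega) (by omega)).1 S.2.2))

theorem card_step (Y : YoungDiagram) (i : ℕ) (h1 : 1 ≤ i) (h2 : i + 3 ≤ Y.card) :
    Nat.card {T : SYT Y // T.IsDescent i ∧ T.IsDescent (i+1)} =
      Nat.card {T : SYT Y // T.IsDescent (i+1) ∧ T.IsDescent (i+2)} :=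
  Nat.card_congr (equivStep Y i h1 h2)

theorem card_base (Y : YoungDiagram) : ∀ j : ℕ, 1 ≤ j → j + 2 ≤ Y.card →
    Nat.card {T : SYT Y // T.IsDescent j ∧ T.IsDescent (j+1)} =
      Nat.card {T : SYT Y // T.IsDescent 1 ∧ T.IsDescent 2} := by
  intro j
  induction j with
  | zero => omega
  | succ j ih =>
    intro h1 h2
    by_cases hj : j = 0
    · subst hj
      rfl
    · have h1' : 1 ≤ j := by omega
      have hstep := card_step Y j h1' (by omega)
      exact hstep.symm.trans (ih h1' (by omega))

end SYT

/-- Expectation of a statistic `g` over uniformly random standard Young tableaux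
of shape `Y` : `E_λ[g] = (1/f^λ) ∑_T g(T)`. -/
noncomputable def sytExpect (Y : YoungDiagram) (g : SYT Y → ℝ) : ℝ :=
  (∑ᶠ T : SYT Y, g T) / (Nat.card (SYT Y) : ℝ)

/-- Variance of a statistic `g` : `Var_λ[g] = E_λ[g²] − (E_λ[g])²`. -/
noncomputable def sytVar (Y : YoungDiagram) (g : SYT Y → ℝ) : ℝ :=
  sytExpect Y (fun T => (g T) ^ 2) - (sytExpect Y g) ^ 2

/-- Probability of an event `P` for a uniformly random standard Young tableau of shape `Y`. -/
noncomputable def sytProb (Y : YoungDiagram) (P : SYT Y → Prop) : ℝ :=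
  (Nat.card {T : SYT Y // P T} : ℝ) / (Nat.card (SYT Y) : ℝ)

/-- The constant `c(λ) = [C(n,2) − Σ_i C(λ_i,2) + Σ_j C(λ'_j,2)] / (n(n−1))`.
Rows and columns are 0-indexed; since `Y` has at most `Y.card` nonempty rows and
columns, the sums over `range Y.card` capture all nonzero terms. -/
noncomputable def cpar (Y : YoungDiagram) : ℝ :=
  ((Y.card.choose 2 : ℝ) - ∑ i ∈ Finset.range Y.card, ((Y.rowLen i).choose 2 : ℝ)
      + ∑ j ∈ Finset.range Y.card, ((Y.colLen j).choose 2 : ℝ))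
    / ((Y.card : ℝ) * ((Y.card : ℝ) - 1))

/-- The hook length of the cell `c = (i, j)` (0-indexed):
`h_{ij} = λ_{i+1} + λ'_{j+1} − (i+1) − (j+1) + 1 = rowLen i + colLen j − i − j − 1`. -/
def hookLen (Y : YoungDiagram) (c : ℕ × ℕ) : ℕ :=
  Y.rowLen c.1 + Y.colLen c.2 - c.1 - c.2 - 1

/-- For a partition `λ` of `n ≥ 3`, the number of standard Young
tableaux of shape `λ` having both `i` and `i+1` as descents is the same for all
`1 ≤ i ≤ n − 2`. -/
theorem count_double_descent_indep (n : ℕ) (hn : 3 ≤ n) (Y : YoungDiagram) (hY : Y.card = n)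
    (i₁ i₂ : ℕ) (h₁ : 1 ≤ i₁) (h₁' : i₁ ≤ n - 2) (h₂ : 1 ≤ i₂) (h₂' : i₂ ≤ n - 2) :
    Nat.card {T : SYT Y // T.IsDescent i₁ ∧ T.IsDescent (i₁ + 1)} =
      Nat.card {T : SYT Y // T.IsDescent i₂ ∧ T.IsDescent (i₂ + 1)} := by
  have e1 : Nat.card {T : SYT Y // T.IsDescent i₁ ∧ T.IsDescent (i₁ + 1)} =
      Nat.card {T : SYT Y // T.IsDescent 1 ∧ T.IsDescent 2} :=
    SYT.card_base Y i₁ h₁ (by omega)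
  have e2 : Nat.card {T : SYT Y // T.IsDescent i₂ ∧ T.IsDescent (i₂ + 1)} =
      Nat.card {T : SYT Y // T.IsDescent 1 ∧ T.IsDescent 2} :=
    SYT.card_base Y i₂ h₂ (by omega)
  exact e1.trans e2.symm
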